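/- arXiv:2604.26415 — 8 statements merged into one kernel-verified Lean document; each statement's English description precedes it below -/
import Mathlib

section
/- Let A = (a, h_1*a + d*b_1, h_2*a + d*b_2, ..., h_k*a + d*b_k), where a ≥ 2 and k ≥ 1 are integers, d is a nonzero integer, B = (b_1, ..., b_k) and H = (h_1, ..., h_k) are sequences of positive integers, and gcd of all entries of A equals 1; if d < 0, assume additionally that h_i*a + d*b_i > 1 for all 1 ≤ i ≤ k. Let p be a positive divisor of a. Then for every r with 0 ≤ r ≤ a/p − 1, the element N_{dr,p} of the Apéry set of a/p in the numerical semigroup ⟨A⟩/p (that is, the minimum element of ⟨A⟩/p congruent to d*r modulo a/p) equals min over m ∈ ℕ of O_B^H(m*a + r*p) * (a/p) + (m*a/p + r)*d. -/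
/-!
Write `gᵢ = hᵢa + dbᵢ` and `q = a/p`. Since `∑ xᵢgᵢ = a ∑ hᵢxᵢ + d ∑ bᵢxᵢ`, every `x` with
`∑ bᵢxᵢ = ma + rp` yields the element `(∑ hᵢxᵢ)q + (mq + r)d` of `⟨A⟩/p`, which is `≡ dr (mod q)`
and nonnegative because all `gᵢ ≥ 0`. Conversely, if `pn = x₀a + ∑ xᵢgᵢ` and `n ≡ dr (mod q)`,
then `a ∣ d(∑ bᵢxᵢ - rp)`; as `gcd(a, d) = 1` and `rp < a`, this forces `∑ bᵢxᵢ = ma + rp` for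
some `m ∈ ℕ`, and the first construction applied to `x` gives an element `≤ n`.
-/

/-- `OBH k b h M = min { Σ_{i=1}^k h i * x i : Σ_{i=1}^k b i * x i = M, x i ∈ ℕ }`
(1-indexed, as an infimum in `ℕ`). -/
noncomputable def OBH (k : ℕ) (b h : ℕ → ℕ) (M : ℕ) : ℕ :=
  sInf {n : ℕ | ∃ x : ℕ → ℕ, ∑ i ∈ Finset.Icc 1 k, b i * x i = M ∧
    n = ∑ i ∈ Finset.Icc 1 k, h i * x i}

open Finset

theorem IsLeast.of_subset_image {α β : Type*} [Preorder α] [PartialOrder β] {f : α → β}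
    (hf : Monotone f) {s : Set α} {t : Set β} {a : α} (ha : IsLeast s a) (hts : t ⊆ f '' s)
    (hst : ∀ x ∈ s, ∃ y ∈ t, y ≤ f x) : IsLeast t (f a) := by
  have hlower : f a ∈ lowerBounds t := by
    rintro _ hy
    obtain ⟨x, hx, rfl⟩ := hts hy
    exact hf (ha.2 hx)
  obtain ⟨y, hy, hya⟩ := hst a ha.1
  exact ⟨le_antisymm (hlower hy) hya ▸ hy, hlower⟩

theorem Nat.exists_eq_mul_add_of_dvd_sub {S c a : ℕ} (h : (a : ℤ) ∣ S - c) (hc : c < a) :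
    ∃ m, S = m * a + c := by
  have hmod : c % a = S % a := Nat.modEq_iff_dvd.mpr h
  rw [Nat.mod_eq_of_lt hc] at hmod
  exact ⟨S / a, by rw [hmod, mul_comm]; exact (Nat.div_add_mod S a).symm⟩

section

variable {k : ℕ} {b h : ℕ → ℕ} {M : ℕ}

theorem OBH_le_of_sum_eq {x : ℕ → ℕ} (hx : ∑ i ∈ Icc 1 k, b i * x i = M) :
    OBH k b h M ≤ ∑ i ∈ Icc 1 k, h i * x i :=
  Nat.sInf_le ⟨x, hx, rfl⟩

theorem exists_OBH_eq (hM : ∃ x : ℕ → ℕ, ∑ i ∈ Icc 1 k, b i * x i = M) :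
    ∃ y : ℕ → ℕ, ∑ i ∈ Icc 1 k, b i * y i = M ∧ OBH k b h M = ∑ i ∈ Icc 1 k, h i * y i := by
  obtain ⟨x, hx⟩ := hM
  exact Nat.sInf_mem (s := {n | ∃ y : ℕ → ℕ, ∑ i ∈ Icc 1 k, b i * y i = M ∧
    n = ∑ i ∈ Icc 1 k, h i * y i}) ⟨_, x, hx, rfl⟩

end

/-- `s ∈ ⟨a, h₁a + db₁, …, hₖa + dbₖ⟩`. -/
def MemSemigroup (a k : ℕ) (d : ℤ) (b h : ℕ → ℕ) (s : ℤ) : Prop :=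
  ∃ x : ℕ → ℕ, s = x 0 * a + ∑ i ∈ Icc 1 k, (x i : ℤ) * ((h i : ℤ) * a + d * b i)

section

variable {a k p q r : ℕ} {d : ℤ} {b h : ℕ → ℕ}

theorem sum_mul_generator (s : Finset ℕ) (y : ℕ → ℕ) :
    ∑ i ∈ s, (y i : ℤ) * ((h i : ℤ) * a + d * b i) =
      a * ((∑ i ∈ s, h i * y i : ℕ) : ℤ) + d * ((∑ i ∈ s, b i * y i : ℕ) : ℤ) := by
  push_cast
  rw [mul_sum, mul_sum, ← sum_add_distrib]
  exact sum_congr rfl fun i _ => by ring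

theorem isCoprime_of_gcd_generators_eq_one
    (hgcd : (Icc 0 k).gcd (fun i => if i = 0 then (a : ℤ) else (h i : ℤ) * a + d * b i) = 1) :
    IsCoprime (a : ℤ) d := by
  rw [← gcd_isUnit_iff]
  refine isUnit_of_dvd_one (hgcd ▸ dvd_gcd fun i _ => ?_)
  split_ifs
  · exact gcd_dvd_left _ _
  · exact dvd_add ((gcd_dvd_left _ _).mul_left _) ((gcd_dvd_right _ _).mul_right _)

theorem exists_mem_quotient_of_sum_eq (haq : a = p * q) (hp : 0 < p)
    (hgen : ∀ i ∈ Icc 1 k, 0 ≤ (h i : ℤ) * a + d * b i)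
    {m : ℕ} {y : ℕ → ℕ} (hy : ∑ i ∈ Icc 1 k, b i * y i = m * a + r * p) :
    ∃ n : ℕ, (MemSemigroup a k d b h (p * n) ∧ (q : ℤ) ∣ n - d * r) ∧
      (n : ℤ) = (∑ i ∈ Icc 1 k, h i * y i : ℕ) * q + ((m * q + r : ℕ) : ℤ) * d := by
  obtain ⟨z, hz_def⟩ :
      ∃ z : ℤ, z = (∑ i ∈ Icc 1 k, h i * y i : ℕ) * q + ((m * q + r : ℕ) : ℤ) * d := ⟨_, rfl⟩
  have hpz : p * z = ∑ i ∈ Icc 1 k, (y i : ℤ) * ((h i : ℤ) * a + d * b i) := by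
    rw [sum_mul_generator, hy, haq, hz_def]
    push_cast
    ring
  have hz : 0 ≤ z := nonneg_of_mul_nonneg_right
    (hpz ▸ sum_nonneg fun i hi => mul_nonneg (by positivity) (hgen i hi)) (by exact_mod_cast hp)
  lift z to ℕ using hz with n
  refine ⟨n, ⟨⟨Function.update y 0 0, ?_⟩, ?_⟩, hz_def⟩
  · rw [hpz, Function.update_self, Nat.cast_zero, zero_mul, zero_add]
    refine sum_congr rfl fun i hi => ?_
    rw [Function.update_of_ne (by grind)]
  · exact ⟨(∑ i ∈ Icc 1 k, h i * y i : ℕ) + m * d, by rw [hz_def]; push_cast; ring⟩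

theorem exists_sum_eq_of_mem_quotient (haq : a = p * q) (hp : 0 < p) (hcop : IsCoprime (a : ℤ) d)
    (hrq : r < q) {n : ℕ} (hn : MemSemigroup a k d b h (p * n)) (hdvd : (q : ℤ) ∣ n - d * r) :
    ∃ m : ℕ, (∃ x : ℕ → ℕ, ∑ i ∈ Icc 1 k, b i * x i = m * a + r * p) ∧
      (OBH k b h (m * a + r * p) : ℤ) * q + ((m * q + r : ℕ) : ℤ) * d ≤ n := by
  obtain ⟨x, hx⟩ := hn
  obtain ⟨t, ht⟩ := hdvd
  rw [sum_mul_generator] at hx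
  set H := ∑ i ∈ Icc 1 k, h i * x i
  set S := ∑ i ∈ Icc 1 k, b i * x i
  have hS : (a : ℤ) ∣ S - (r * p : ℕ) := by
    refine hcop.dvd_of_dvd_mul_left ⟨t - x 0 - H, ?_⟩
    rw [haq] at hx ⊢
    push_cast at hx ⊢
    linear_combination p * ht - hx
  have hrpa : r * p < a := haq ▸ mul_comm q p ▸ Nat.mul_lt_mul_of_pos_right hrq hp
  obtain ⟨m, hm⟩ := Nat.exists_eq_mul_add_of_dvd_sub hS hrpa
  refine ⟨m, ⟨x, hm⟩, ?_⟩
  have hn : (n : ℤ) = (x 0 + H + m * d) * q + d * r := by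
    refine mul_left_cancel₀ (by positivity : (p : ℤ) ≠ 0) ?_
    rw [hx, hm, haq]
    push_cast
    ring
  have hOBH : (OBH k b h (m * a + r * p) : ℤ) ≤ x 0 + H := by
    have := OBH_le_of_sum_eq (h := h) hm
    omega
  rw [hn]
  push_cast
  linarith [mul_le_mul_of_nonneg_right hOBH (Nat.cast_nonneg (α := ℤ) q)]

end

theorem stmt_0_general (a k p : ℕ) (d : ℤ) (b h : ℕ → ℕ)
    (ha : 2 ≤ a)
    (hgcd : Finset.gcd (Finset.Icc 0 k)
      (fun i => if i = 0 then (a : ℤ) else (h i : ℤ) * a + d * b i) = 1)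
    (hneg : d < 0 → ∀ i, 1 ≤ i → i ≤ k → 1 < (h i : ℤ) * a + d * b i)
    (hp : 0 < p) (hpa : p ∣ a)
    (r : ℕ) (hr : r ≤ a / p - 1)
    (N : ℕ)
    (hN : IsLeast {n : ℕ |
      (∃ x : ℕ → ℕ, (p * n : ℤ) = (x 0 : ℤ) * a +
        ∑ i ∈ Finset.Icc 1 k, (x i : ℤ) * ((h i : ℤ) * a + d * b i)) ∧
      ((a / p : ℕ) : ℤ) ∣ (n : ℤ) - d * r} N) :
    IsLeast {z : ℤ | ∃ m : ℕ,
      (∃ x : ℕ → ℕ, ∑ i ∈ Finset.Icc 1 k, b i * x i = m * a + r * p) ∧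
      z = (OBH k b h (m * a + r * p) : ℤ) * ((a / p : ℕ) : ℤ) +
        ((m * (a / p) + r : ℕ) : ℤ) * d}
      (N : ℤ) := by
  obtain ⟨q, haq⟩ := hpa
  rw [haq, Nat.mul_div_cancel_left _ hp] at hr hN ⊢
  rw [← haq] at hN ⊢
  have hrq : r < q := by
    have : q ≠ 0 := by rintro rfl; omega
    omega
  have hgen : ∀ i ∈ Icc 1 k, 0 ≤ (h i : ℤ) * a + d * b i := by
    intro i hi
    rcases lt_or_ge d 0 with hd | hd
    · linarith [hneg hd i (mem_Icc.mp hi).1 (mem_Icc.mp hi).2]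
    · exact add_nonneg (by positivity) (mul_nonneg hd (by positivity))
  refine hN.of_subset_image Nat.mono_cast ?_ ?_
  · rintro z ⟨m, hrep, rfl⟩
    obtain ⟨y, hy, hOBH⟩ := exists_OBH_eq (h := h) hrep
    rw [hOBH]
    exact exists_mem_quotient_of_sum_eq haq hp hgen hy
  · rintro n ⟨hn, hdvd⟩
    obtain ⟨m, hrep, hle⟩ :=
      exists_sum_eq_of_mem_quotient haq hp (isCoprime_of_gcd_generators_eq_one hgcd) hrq hn hdvd
    exact ⟨_, ⟨m, hrep, rfl⟩, hle⟩

/-- for `A = (a, h₁a+db₁, …, hₖa+dbₖ)` and `p` a positive divisor of `a`,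
the Apéry element `N_{dr,p}` of `a/p` in `⟨A⟩/p` (the least element of `⟨A⟩/p`
congruent to `d·r mod a/p`) equals
`min_{m ∈ ℕ} O_B^H(ma + rp) · (a/p) + (ma/p + r)·d`. -/
theorem stmt_0 (a k p : ℕ) (d : ℤ) (b h : ℕ → ℕ)
    (ha : 2 ≤ a) (hk : 1 ≤ k)
    (hd : d ≠ 0)
    (hbpos : ∀ i, 1 ≤ i → i ≤ k → 0 < b i)
    (hhpos : ∀ i, 1 ≤ i → i ≤ k → 0 < h i)
    (hgcd : Finset.gcd (Finset.Icc 0 k)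
      (fun i => if i = 0 then (a : ℤ) else (h i : ℤ) * a + d * b i) = 1)
    (hneg : d < 0 → ∀ i, 1 ≤ i → i ≤ k → 1 < (h i : ℤ) * a + d * b i)
    (hp : 0 < p) (hpa : p ∣ a)
    (r : ℕ) (hr : r ≤ a / p - 1)
    (N : ℕ)
    (hN : IsLeast {n : ℕ |
      (∃ x : ℕ → ℕ, (p * n : ℤ) = (x 0 : ℤ) * a +
        ∑ i ∈ Finset.Icc 1 k, (x i : ℤ) * ((h i : ℤ) * a + d * b i)) ∧
      ((a / p : ℕ) : ℤ) ∣ (n : ℤ) - d * r} N) :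
    IsLeast {z : ℤ | ∃ m : ℕ,
      (∃ x : ℕ → ℕ, ∑ i ∈ Finset.Icc 1 k, b i * x i = m * a + r * p) ∧
      z = (OBH k b h (m * a + r * p) : ℤ) * ((a / p : ℕ) : ℤ) +
        ((m * (a / p) + r : ℕ) : ℤ) * d}
      (N : ℤ) :=
  stmt_0_general a k p d b h ha hgcd hneg hp hpa r hr N hN
end

section
/- Let B = (b_1, b_2, ..., b_k) with b_1 = 1, b_{i+1} = s_i*b_i + 1 and s_i ≥ s_{i−1} ≥ 1 for 1 ≤ i ≤ k−1. Then for any positive integer M, there is a unique tuple (x_1, ..., x_k) of nonnegative integers with Σ_{i=1}^k b_i*x_i = M satisfying: (1) x_k = ⌊M/b_k⌋; (2) x_i ∈ {0, 1, ..., s_i} for every 1 ≤ i ≤ k−1; (3) if x_i = s_i for some 2 ≤ i ≤ k−1, then x_1 = ⋯ = x_{i−1} = 0. Moreover, this tuple achieves the minimum opt_B(M) = x_1 + x_2 + ⋯ + x_k. -/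
/-!
The greedy digits of `N` with respect to `b₁, …, b_j` (`N / b_j` coins `b_j`, then recurse on
`N % b_j`) are the only presentation whose partial sums satisfy `∑_{i ≤ l} bᵢ xᵢ < b_{l+1}` for
all `l < j`: this is division with remainder, one coin at a time from the top. When
`b_{l+1} = s_l b_l + 1`, that partial-sum condition is exactly the pair of conditions
`x_l ≤ s_l` and `x_l = s_l → x_1 = ⋯ = x_{l-1} = 0`.

For optimality, let `G_j(N)` be the number of greedy coins. Monotonicity of `s` gives
`G_j(N) + 1 ≤ G_j(N + 1) + s_j`, and since `b_{j+1} = 1 + s_j b_j` this yields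
`G_j(N) < G_j(N + b_{j+1})`. Hence `G_{j+1} ≤ G_j`, and an induction on `j` shows
`G_j(∑ bᵢ yᵢ) ≤ ∑ yᵢ` for every presentation `y`.
-/

namespace GreedyPresentation

open Finset

def greedy (b : ℕ → ℕ) : ℕ → ℕ → ℕ → ℕ
  | 0, _ => 0
  | j + 1, N => Function.update (greedy b j (N % b (j + 1))) (j + 1) (N / b (j + 1))

def greedyCount (b : ℕ → ℕ) (j N : ℕ) : ℕ := ∑ i ∈ Icc 1 j, greedy b j N i

def PartialSumsBelow (b : ℕ → ℕ) (j : ℕ) (y : ℕ → ℕ) : Prop :=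
  ∀ i < j, ∑ l ∈ Icc 1 i, b l * y l < b (i + 1)

variable {b : ℕ → ℕ} {j N : ℕ}

theorem greedy_succ_self : greedy b (j + 1) N (j + 1) = N / b (j + 1) := by
  simp [greedy]

theorem greedy_succ_of_le {i : ℕ} (h : i ≤ j) :
    greedy b (j + 1) N i = greedy b j (N % b (j + 1)) i := by
  simp [greedy, Function.update_of_ne (show i ≠ j + 1 by omega)]

theorem sum_mul_greedy_succ (f : ℕ → ℕ) :
    ∑ i ∈ Icc 1 (j + 1), f i * greedy b (j + 1) N i =
      ∑ i ∈ Icc 1 j, f i * greedy b j (N % b (j + 1)) i + f (j + 1) * (N / b (j + 1)) := by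
  rw [sum_Icc_succ_top (by omega), greedy_succ_self]
  congr 1
  exact sum_congr rfl fun i hi => by rw [greedy_succ_of_le (mem_Icc.1 hi).2]

theorem sum_mul_greedy (hb1 : b 1 = 1) (hj : 1 ≤ j) :
    ∑ i ∈ Icc 1 j, b i * greedy b j N i = N := by
  induction j, hj using Nat.le_induction generalizing N with
  | base => simp [greedy, hb1]
  | succ j _ ih => rw [sum_mul_greedy_succ, ih, Nat.mod_add_div]

theorem partialSumsBelow_greedy (hb1 : b 1 = 1) (hpos : ∀ i, 1 ≤ i → i ≤ j → 0 < b i) :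
    PartialSumsBelow b j (greedy b j N) := by
  induction j generalizing N with
  | zero => intro i hi; omega
  | succ j ih =>
    intro i hi
    rcases Nat.eq_zero_or_pos i with rfl | hi0
    · simp [hb1]
    have hrestrict : ∑ l ∈ Icc 1 i, b l * greedy b (j + 1) N l =
        ∑ l ∈ Icc 1 i, b l * greedy b j (N % b (j + 1)) l :=
      sum_congr rfl fun l hl => by rw [greedy_succ_of_le (by grind)]
    rw [hrestrict]
    rcases (Nat.lt_succ_iff.1 hi).eq_or_lt with rfl | hij
    · rw [sum_mul_greedy hb1 hi0]
      exact Nat.mod_lt _ (hpos _ (by omega) le_rfl)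
    · exact ih (fun l h1 h2 => hpos l h1 (by omega)) i hij

theorem eq_greedy_of_partialSumsBelow {y : ℕ → ℕ} (hy : PartialSumsBelow b j y)
    (hN : ∑ i ∈ Icc 1 j, b i * y i = N) : ∀ i, 1 ≤ i → i ≤ j → y i = greedy b j N i := by
  induction j generalizing N with
  | zero => intro i h1 h2; omega
  | succ j ih =>
    rw [sum_Icc_succ_top (by omega)] at hN
    have hlt := hy j j.lt_succ_self
    obtain ⟨hdiv, hmod⟩ := (Nat.div_mod_unique (by omega)).2 ⟨hN, hlt⟩
    intro i h1 h2
    rcases h2.eq_or_lt with rfl | h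
    · rw [greedy_succ_self, hdiv]
    · rw [greedy_succ_of_le (by omega)]
      exact ih (fun i hi => hy i (by omega)) hmod.symm i h1 (by omega)

namespace PartialSumsBelow

variable {k : ℕ} {s y : ℕ → ℕ}

theorem pos (hy : PartialSumsBelow b k y) {i : ℕ} (h1 : 1 ≤ i) (h2 : i ≤ k) : 0 < b i := by
  have := hy (i - 1) (by omega)
  rw [Nat.sub_add_cancel h1] at this
  exact (Nat.zero_le _).trans_lt this

theorem le (hbrec : ∀ i, 1 ≤ i → i ≤ k - 1 → b (i + 1) = s i * b i + 1)
    (hy : PartialSumsBelow b k y) {i : ℕ} (h1 : 1 ≤ i) (h2 : i ≤ k - 1) : y i ≤ s i := by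
  have hterm : b i * y i ≤ ∑ l ∈ Icc 1 i, b l * y l :=
    single_le_sum (f := fun l => b l * y l) (fun _ _ => Nat.zero_le _) (by simp [h1])
  have hlt := hy i (by omega)
  rw [hbrec i h1 h2] at hlt
  have : b i * y i ≤ b i * s i := by rw [mul_comm (b i) (s i)]; omega
  exact Nat.le_of_mul_le_mul_left this (hy.pos h1 (by omega))

theorem eq_zero (hbrec : ∀ i, 1 ≤ i → i ≤ k - 1 → b (i + 1) = s i * b i + 1)
    (hy : PartialSumsBelow b k y) {i : ℕ} (hi : i ≤ k - 1) (hyi : y i = s i)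
    {l : ℕ} (hl : 1 ≤ l) (hli : l < i) : y l = 0 := by
  obtain ⟨i, rfl⟩ : ∃ i', i = i' + 1 := ⟨i - 1, by omega⟩
  have hlt := hy (i + 1) (by omega)
  rw [sum_Icc_succ_top (by omega), hbrec (i + 1) (by omega) hi, hyi, mul_comm (s _)] at hlt
  have hlower : b l * y l = 0 :=
    sum_eq_zero_iff.1 (by omega : ∑ l ∈ Icc 1 i, b l * y l = 0) l (mem_Icc.2 ⟨hl, by omega⟩)
  simpa [(hy.pos hl (by omega)).ne'] using hlower

end PartialSumsBelow

theorem partialSumsBelow_of_le_of_eq_zero {k : ℕ} {s y : ℕ → ℕ} (hpos : 0 < b 1)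
    (hbrec : ∀ i, 1 ≤ i → i ≤ k - 1 → b (i + 1) = s i * b i + 1)
    (hle : ∀ i, 1 ≤ i → i ≤ k - 1 → y i ≤ s i)
    (hzero : ∀ i, 2 ≤ i → i ≤ k - 1 → y i = s i → ∀ j, 1 ≤ j → j < i → y j = 0) :
    PartialSumsBelow b k y := by
  intro i hi
  induction i with
  | zero => simpa using hpos
  | succ i ih =>
    rw [sum_Icc_succ_top (by omega), hbrec (i + 1) (by omega) (by omega)]
    by_cases hmax : y (i + 1) = s (i + 1)
    · have hlower : ∑ l ∈ Icc 1 i, b l * y l = 0 := by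
        refine sum_eq_zero fun l hl => ?_
        rw [mem_Icc] at hl
        rw [hzero (i + 1) (by omega) (by omega) hmax l hl.1 (by omega), mul_zero]
      rw [hlower, hmax, mul_comm]
      omega
    · have hsucc : y (i + 1) + 1 ≤ s (i + 1) :=
        lt_of_le_of_ne (hle (i + 1) (by omega) (by omega)) hmax
      have hlower := ih (by omega)
      nlinarith

theorem greedyCount_succ :
    greedyCount b (j + 1) N = greedyCount b j (N % b (j + 1)) + N / b (j + 1) := by
  simpa only [greedyCount, one_mul] using sum_mul_greedy_succ (b := b) (j := j) (N := N) fun _ => 1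

theorem greedyCount_zero_right : ∀ j, greedyCount b j 0 = 0
  | 0 => rfl
  | j + 1 => by rw [greedyCount_succ, Nat.zero_mod, greedyCount_zero_right j, Nat.zero_div]

theorem greedyCount_one (hb1 : b 1 = 1) : greedyCount b 1 N = N := by
  rw [greedyCount_succ, hb1, Nat.div_one]
  simp [greedyCount]

theorem greedyCount_succ_of_lt (h : N < b (j + 1)) :
    greedyCount b (j + 1) N = greedyCount b j N := by
  rw [greedyCount_succ, Nat.mod_eq_of_lt h, Nat.div_eq_of_lt h, add_zero]

theorem greedyCount_add_mul (hj : 1 ≤ j) (hb : 0 < b j) (c : ℕ) :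
    greedyCount b j (N + b j * c) = greedyCount b j N + c := by
  obtain ⟨j, rfl⟩ : ∃ j', j = j' + 1 := ⟨j - 1, by omega⟩
  rw [greedyCount_succ, greedyCount_succ, Nat.add_mul_mod_self_left, Nat.add_mul_div_left _ _ hb]
  omega

theorem greedyCount_mul (hj : 1 ≤ j) (hb : 0 < b j) (c : ℕ) : greedyCount b j (b j * c) = c := by
  simpa [greedyCount_zero_right] using greedyCount_add_mul (N := 0) hj hb c

structure CoinChain (k : ℕ) (b s : ℕ → ℕ) : Prop where
  one : b 1 = 1
  succ_eq : ∀ i, 1 ≤ i → i ≤ k - 1 → b (i + 1) = s i * b i + 1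

namespace CoinChain

variable {k : ℕ} {s : ℕ → ℕ}

theorem pos (hb : CoinChain k b s) : ∀ i, 1 ≤ i → i ≤ k → 0 < b i
  | 1, _, _ => by rw [hb.one]; exact one_pos
  | i + 2, _, hi => by rw [hb.succ_eq (i + 1) (by omega) (by omega)]; exact Nat.succ_pos _

theorem greedyCount_add_one_le (hb : CoinChain k b s)
    (hs : ∀ i, 2 ≤ i → i ≤ k - 1 → s (i - 1) ≤ s i) (hj : 1 ≤ j) (hjk : j ≤ k - 1) (N : ℕ) :
    greedyCount b j N + 1 ≤ greedyCount b j (N + 1) + s j := by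
  induction j, hj using Nat.le_induction generalizing N with
  | base => simp [greedyCount_one hb.one]
  | succ j hj ih =>
    have hm : b (j + 1) = s j * b j + 1 := hb.succ_eq j hj (by omega)
    have hbj : 0 < b j := hb.pos j hj (by omega)
    have hsj : s j ≤ s (j + 1) := hs (j + 1) (by omega) hjk
    obtain ⟨q, r, hr, rfl⟩ : ∃ q r, r < b (j + 1) ∧ N = r + b (j + 1) * q :=
      ⟨N / b (j + 1), N % b (j + 1), Nat.mod_lt _ (by omega), (Nat.mod_add_div _ _).symm⟩
    rw [add_right_comm, greedyCount_add_mul (by omega) (by omega),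
      greedyCount_add_mul (by omega) (by omega), greedyCount_succ_of_lt hr]
    rcases (show r + 1 ≤ b (j + 1) from hr).lt_or_eq with hr1 | hr1
    · have hih := ih (by omega) r
      rw [greedyCount_succ_of_lt hr1]
      omega
    · -- the carry: `r = s j * b j` costs `s j` greedy coins, `r + 1 = b (j + 1)` only one
      have hr' : r = b j * s j := by rw [mul_comm]; omega
      rw [hr1, ← mul_one (b (j + 1)), greedyCount_mul (by omega) (by omega), hr',
        greedyCount_mul hj hbj]
      omega

theorem greedyCount_lt_add_succ (hb : CoinChain k b s)
    (hs : ∀ i, 2 ≤ i → i ≤ k - 1 → s (i - 1) ≤ s i) (hj : 1 ≤ j) (hjk : j ≤ k - 1) (N : ℕ) :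
    greedyCount b j N < greedyCount b j (N + b (j + 1)) := by
  have hstep := hb.greedyCount_add_one_le hs hj hjk N
  rw [hb.succ_eq j hj hjk, mul_comm, ← add_assoc, add_right_comm,
    greedyCount_add_mul hj (hb.pos j hj (by omega))]
  omega

theorem greedyCount_succ_le (hb : CoinChain k b s)
    (hs : ∀ i, 2 ≤ i → i ≤ k - 1 → s (i - 1) ≤ s i) (hj : 1 ≤ j) (hjk : j ≤ k - 1) (N : ℕ) :
    greedyCount b (j + 1) N ≤ greedyCount b j N := by
  have hiter : ∀ q r, greedyCount b j r + q ≤ greedyCount b j (r + b (j + 1) * q) := by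
    intro q
    induction q with
    | zero => simp
    | succ q ih =>
      intro r
      have hstep := hb.greedyCount_lt_add_succ hs hj hjk (r + b (j + 1) * q)
      have hih := ih r
      rw [mul_add_one, ← add_assoc r]
      omega
  have hdivmod := hiter (N / b (j + 1)) (N % b (j + 1))
  rw [Nat.mod_add_div] at hdivmod
  rw [greedyCount_succ]
  omega

theorem greedyCount_sum_le (hb : CoinChain k b s)
    (hs : ∀ i, 2 ≤ i → i ≤ k - 1 → s (i - 1) ≤ s i) (hjk : j ≤ k) (y : ℕ → ℕ) :
    greedyCount b j (∑ i ∈ Icc 1 j, b i * y i) ≤ ∑ i ∈ Icc 1 j, y i := by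
  induction j with
  | zero => simp [greedyCount]
  | succ j ih =>
    rw [sum_Icc_succ_top (by omega), sum_Icc_succ_top (by omega),
      greedyCount_add_mul (by omega) (hb.pos _ (by omega) hjk)]
    rcases Nat.eq_zero_or_pos j with rfl | hj
    · simp [greedyCount_one hb.one]
    · have hcoin := hb.greedyCount_succ_le hs hj (by omega) (∑ i ∈ Icc 1 j, b i * y i)
      have hih := ih (by omega)
      omega

end CoinChain

end GreedyPresentation

open GreedyPresentation

theorem stmt_2_general (k : ℕ) (b s : ℕ → ℕ) (hk : 2 ≤ k)
    (hb1 : b 1 = 1)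
    (hbrec : ∀ i, 1 ≤ i → i ≤ k - 1 → b (i + 1) = s i * b i + 1)
    (hsmono : ∀ i, 2 ≤ i → i ≤ k - 1 → s (i - 1) ≤ s i)
    (M : ℕ) :
    ∃ x : ℕ → ℕ,
      (∑ i ∈ Finset.Icc 1 k, b i * x i = M ∧
       x k = M / b k ∧
       (∀ i, 1 ≤ i → i ≤ k - 1 → x i ≤ s i) ∧
       (∀ i, 2 ≤ i → i ≤ k - 1 → x i = s i → ∀ j, 1 ≤ j → j < i → x j = 0)) ∧
      (∀ y : ℕ → ℕ,
        (∑ i ∈ Finset.Icc 1 k, b i * y i = M ∧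
         y k = M / b k ∧
         (∀ i, 1 ≤ i → i ≤ k - 1 → y i ≤ s i) ∧
         (∀ i, 2 ≤ i → i ≤ k - 1 → y i = s i → ∀ j, 1 ≤ j → j < i → y j = 0)) →
        ∀ i, 1 ≤ i → i ≤ k → y i = x i) ∧
      IsLeast {n : ℕ | ∃ y : ℕ → ℕ, ∑ i ∈ Finset.Icc 1 k, b i * y i = M ∧
        n = ∑ i ∈ Finset.Icc 1 k, y i} (∑ i ∈ Finset.Icc 1 k, x i) := by
  have hb : CoinChain k b s := ⟨hb1, hbrec⟩
  have hgreedy : PartialSumsBelow b k (greedy b k M) := partialSumsBelow_greedy hb1 hb.pos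
  have hsum : ∑ i ∈ Finset.Icc 1 k, b i * greedy b k M i = M := sum_mul_greedy hb1 (by omega)
  refine ⟨greedy b k M, ⟨hsum, ?_, fun i h1 h2 => hgreedy.le hbrec h1 h2,
    fun i _ hi hxi j hj hji => hgreedy.eq_zero hbrec hi hxi hj hji⟩, ?_,
    ⟨greedy b k M, hsum, rfl⟩, ?_⟩
  · obtain ⟨k, rfl⟩ : ∃ k', k = k' + 1 := ⟨k - 1, by omega⟩
    exact greedy_succ_self
  · rintro y ⟨hy, -, hle, hzero⟩
    exact eq_greedy_of_partialSumsBelow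
      (partialSumsBelow_of_le_of_eq_zero (by rw [hb1]; exact one_pos) hbrec hle hzero) hy
  · rintro n ⟨y, hy, rfl⟩
    exact hy ▸ hb.greedyCount_sum_le hsmono le_rfl y

/-- existence and uniqueness of the greedy presentation of a positive
integer `M` with respect to `B = (b_1, …, b_k)` (with `b_1 = 1`, `b_{i+1} = s_i b_i + 1`,
`s_i ≥ s_{i-1} ≥ 1`), and the fact that it achieves `opt_B(M) = x_1 + ⋯ + x_k`. -/
theorem stmt_2 (k : ℕ) (b s : ℕ → ℕ) (hk : 2 ≤ k)
    (hb1 : b 1 = 1)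
    (hbrec : ∀ i, 1 ≤ i → i ≤ k - 1 → b (i + 1) = s i * b i + 1)
    (hs1 : ∀ i, 1 ≤ i → i ≤ k - 1 → 1 ≤ s i)
    (hsmono : ∀ i, 2 ≤ i → i ≤ k - 1 → s (i - 1) ≤ s i)
    (M : ℕ) (hM : 1 ≤ M) :
    ∃ x : ℕ → ℕ,
      (∑ i ∈ Finset.Icc 1 k, b i * x i = M ∧
       x k = M / b k ∧
       (∀ i, 1 ≤ i → i ≤ k - 1 → x i ≤ s i) ∧
       (∀ i, 2 ≤ i → i ≤ k - 1 → x i = s i → ∀ j, 1 ≤ j → j < i → x j = 0)) ∧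
      (∀ y : ℕ → ℕ,
        (∑ i ∈ Finset.Icc 1 k, b i * y i = M ∧
         y k = M / b k ∧
         (∀ i, 1 ≤ i → i ≤ k - 1 → y i ≤ s i) ∧
         (∀ i, 2 ≤ i → i ≤ k - 1 → y i = s i → ∀ j, 1 ≤ j → j < i → y j = 0)) →
        ∀ i, 1 ≤ i → i ≤ k → y i = x i) ∧
      IsLeast {n : ℕ | ∃ y : ℕ → ℕ, ∑ i ∈ Finset.Icc 1 k, b i * y i = M ∧
        n = ∑ i ∈ Finset.Icc 1 k, y i} (∑ i ∈ Finset.Icc 1 k, x i) :=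
  stmt_2_general k b s hk hb1 hbrec hsmono M
end

section
/- Let B = (b_1,...,b_k) with b_1 = 1, b_{i+1} = s_i*b_i + 1 and s_i ≥ s_{i−1} ≥ 1 for 1 ≤ i ≤ k−1, let u be a positive integer, and assume s_i ≤ u + 1 for all 1 ≤ i ≤ k−1. Let m_1, m_2 ∈ ℕ with greedy presentations X(m_1) = (x'_1,...,x'_k) and X(m_2) = (x_1,...,x_k). If X(m_1) ⪯ X(m_2) in the colexicographic order, then w(m_1) ≤ w(m_2). Moreover, if m_1 ≠ m_2 and s_i < u + 1 for all 1 ≤ i ≤ k−1, then w(m_1) < w(m_2). -/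
/-!
Write `c i = u * b i + 1` for the weight of the `i`-th digit. Since `b (i + 1) = s i * b i + 1`,
the condition `s i ≤ u + 1` is exactly `c i * s i ≤ c (i + 1)`, and `s i ≤ u` makes it strict.
By induction on `j`, the digit conditions of a greedy presentation then bound the weight of the
digits below position `j` by `c j` (strictly, in the second case): either the `j - 1`-st digit is
saturated and everything below it vanishes, or it leaves room for one more `c (j - 1)`.
If `X(m₁)` and `X(m₂)` agree above position `j` and `x'_j < x_j`, the extra `c j` on the side
of `m₂` outweighs everything `X(m₁)` carries below `j`.
-/

open Finset

def IsGreedyDigits (s : ℕ → ℕ) (n : ℕ) (x : ℕ → ℕ) : Prop :=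
  (∀ i, 1 ≤ i → i ≤ n → x i ≤ s i) ∧
    ∀ i, 2 ≤ i → i ≤ n → x i = s i → ∀ j, 1 ≤ j → j < i → x j = 0

namespace IsGreedyDigits

variable {s c x : ℕ → ℕ} {n : ℕ}

theorem sum_Ico_succ_le_mul (hx : IsGreedyDigits s n x) {m : ℕ} (hm : 1 ≤ m) (hmn : m ≤ n)
    (hlow : ∑ i ∈ Ico 1 m, c i * x i ≤ c m) :
    ∑ i ∈ Ico 1 (m + 1), c i * x i ≤ c m * s m := by
  rw [sum_Ico_succ_top hm]
  rcases (hx.1 m hm hmn).eq_or_lt with hsat | hlt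
  · have hzero : ∑ i ∈ Ico 1 m, c i * x i = 0 := sum_eq_zero fun i hi => by
      have hi := mem_Ico.1 hi
      rw [hx.2 m (by omega) hmn hsat i hi.1 hi.2, mul_zero]
    rw [hzero, hsat, zero_add]
  · calc ∑ i ∈ Ico 1 m, c i * x i + c m * x m ≤ c m * (x m + 1) := by rw [mul_add_one]; omega
      _ ≤ c m * s m := Nat.mul_le_mul_left _ hlt

theorem sum_Ico_le (hx : IsGreedyDigits s n x) (hc : ∀ i, 1 ≤ i → i ≤ n → c i * s i ≤ c (i + 1))
    {j : ℕ} (hj : 1 ≤ j) (hjn : j ≤ n + 1) : ∑ i ∈ Ico 1 j, c i * x i ≤ c j := by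
  induction j, hj using Nat.le_induction with
  | base => simp
  | succ m hm ih =>
    exact (hx.sum_Ico_succ_le_mul hm (by omega) (ih (by omega))).trans (hc m hm (by omega))

theorem sum_Ico_lt (hx : IsGreedyDigits s n x) (hc₁ : 0 < c 1)
    (hc : ∀ i, 1 ≤ i → i ≤ n → c i * s i < c (i + 1))
    {j : ℕ} (hj : 1 ≤ j) (hjn : j ≤ n + 1) : ∑ i ∈ Ico 1 j, c i * x i < c j := by
  obtain rfl | hj₂ := hj.eq_or_lt
  · simpa using hc₁
  obtain ⟨m, rfl⟩ : ∃ m, j = m + 1 := ⟨j - 1, by omega⟩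
  have hm : 1 ≤ m := by omega
  have hlow := hx.sum_Ico_le (fun i hi hin => (hc i hi hin).le) hm (by omega)
  exact (hx.sum_Ico_succ_le_mul hm (by omega) hlow).trans_lt (hc m hm (by omega))

end IsGreedyDigits

theorem sum_Icc_add_le_of_colex {c x' x : ℕ → ℕ} {j k : ℕ} (hj : 1 ≤ j) (hjk : j ≤ k)
    (hlt : x' j < x j) (htail : ∀ i, j < i → i ≤ k → x' i = x i) :
    ∑ i ∈ Icc 1 k, c i * x' i + c j ≤ ∑ i ∈ Icc 1 k, c i * x i + ∑ i ∈ Ico 1 j, c i * x' i := by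
  have hsplit : ∀ y : ℕ → ℕ, ∑ i ∈ Icc 1 k, c i * y i =
      ∑ i ∈ Ico 1 j, c i * y i + (c j * y j + ∑ i ∈ Ico (j + 1) (k + 1), c i * y i) := fun y => by
    rw [← Ico_add_one_right_eq_Icc, ← sum_Ico_consecutive _ hj (by omega : j ≤ k + 1),
      sum_eq_sum_Ico_succ_bot (by omega : j < k + 1)]
  have htail_eq : ∑ i ∈ Ico (j + 1) (k + 1), c i * x' i = ∑ i ∈ Ico (j + 1) (k + 1), c i * x i :=
    sum_congr rfl fun i hi => by
      have hi := mem_Ico.1 hi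
      rw [htail i (by omega) (by omega)]
  have hjump : c j * x' j + c j ≤ c j * x j := by
    rw [← mul_add_one]; exact Nat.mul_le_mul_left _ hlt
  rw [hsplit x', hsplit x, htail_eq]
  omega

theorem weight_mul_le_weight_succ {u b b' s : ℕ} (hb : b' = s * b + 1) (hs : s ≤ u + 1) :
    (u * b + 1) * s ≤ u * b' + 1 := by
  subst hb; nlinarith

theorem weight_mul_lt_weight_succ {u b b' s : ℕ} (hb : b' = s * b + 1) (hs : s < u + 1) :
    (u * b + 1) * s < u * b' + 1 := by
  subst hb; nlinarith

theorem stmt_4_general (k u : ℕ) (b s : ℕ → ℕ)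
    (hbrec : ∀ i, 1 ≤ i → i ≤ k - 1 → b (i + 1) = s i * b i + 1)
    (hsu : ∀ i, 1 ≤ i → i ≤ k - 1 → s i ≤ u + 1)
    (m₁ m₂ : ℕ)
    -- `x'` is the greedy presentation of `m₁`
    (x' : ℕ → ℕ)
    (hx'sum : ∑ i ∈ Finset.Icc 1 k, b i * x' i = m₁)
    (hx'le : ∀ i, 1 ≤ i → i ≤ k - 1 → x' i ≤ s i)
    (hx'zero : ∀ i, 2 ≤ i → i ≤ k - 1 → x' i = s i → ∀ j, 1 ≤ j → j < i → x' j = 0)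
    -- `x` is the greedy presentation of `m₂`
    (x : ℕ → ℕ)
    (hxsum : ∑ i ∈ Finset.Icc 1 k, b i * x i = m₂)
    -- `X(m₁) ⪯ X(m₂)` in the colexicographic order
    (hcolex : (∀ i, 1 ≤ i → i ≤ k → x' i = x i) ∨
      (∃ j, 1 ≤ j ∧ j ≤ k ∧ x' j < x j ∧ ∀ i, j < i → i ≤ k → x' i = x i)) :
    (∑ i ∈ Finset.Icc 1 k, (u * b i + 1) * x' i ≤
      ∑ i ∈ Finset.Icc 1 k, (u * b i + 1) * x i) ∧
    (m₁ ≠ m₂ → (∀ i, 1 ≤ i → i ≤ k - 1 → s i < u + 1) →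
      ∑ i ∈ Finset.Icc 1 k, (u * b i + 1) * x' i <
        ∑ i ∈ Finset.Icc 1 k, (u * b i + 1) * x i) := by
  have hx' : IsGreedyDigits s (k - 1) x' := ⟨hx'le, hx'zero⟩
  rcases hcolex with heq | ⟨j, hj, hjk, hlt, htail⟩
  · have hcongr (c : ℕ → ℕ) : ∑ i ∈ Icc 1 k, c i * x' i = ∑ i ∈ Icc 1 k, c i * x i :=
      sum_congr rfl fun i hi => by rw [heq i (mem_Icc.1 hi).1 (mem_Icc.1 hi).2]
    refine ⟨(hcongr _).le, fun hne _ => absurd ?_ hne⟩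
    rw [← hx'sum, ← hxsum, hcongr b]
  · have hjump := sum_Icc_add_le_of_colex (c := fun i => u * b i + 1) hj hjk hlt htail
    beta_reduce at hjump
    have hjn : j ≤ k - 1 + 1 := by omega
    refine ⟨?_, fun _ hstrict => ?_⟩
    · have hlow := hx'.sum_Ico_le (c := fun i => u * b i + 1)
        (fun i hi hik => weight_mul_le_weight_succ (hbrec i hi hik) (hsu i hi hik)) hj hjn
      beta_reduce at hlow
      omega
    · have hlow := hx'.sum_Ico_lt (c := fun i => u * b i + 1) (Nat.succ_pos _)
        (fun i hi hik => weight_mul_lt_weight_succ (hbrec i hi hik) (hstrict i hi hik)) hj hjn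
      beta_reduce at hlow
      omega

/-- monotonicity of the weight `w(M) = Σ_i (u·b_i + 1)·x_i` with respect to
the colexicographic order on greedy presentations: if `X(m₁) ⪯ X(m₂)` then
`w(m₁) ≤ w(m₂)`; and if moreover `m₁ ≠ m₂` and `s_i < u + 1` for all `i`, then
`w(m₁) < w(m₂)`. -/
theorem stmt_4 (k u : ℕ) (b s : ℕ → ℕ) (hk : 2 ≤ k) (hu : 1 ≤ u)
    (hb1 : b 1 = 1)
    (hbrec : ∀ i, 1 ≤ i → i ≤ k - 1 → b (i + 1) = s i * b i + 1)
    (hs1 : ∀ i, 1 ≤ i → i ≤ k - 1 → 1 ≤ s i)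
    (hsmono : ∀ i, 2 ≤ i → i ≤ k - 1 → s (i - 1) ≤ s i)
    (hsu : ∀ i, 1 ≤ i → i ≤ k - 1 → s i ≤ u + 1)
    (m₁ m₂ : ℕ)
    -- `x'` is the greedy presentation of `m₁`
    (x' : ℕ → ℕ)
    (hx'sum : ∑ i ∈ Finset.Icc 1 k, b i * x' i = m₁)
    (hx'k : x' k = m₁ / b k)
    (hx'le : ∀ i, 1 ≤ i → i ≤ k - 1 → x' i ≤ s i)
    (hx'zero : ∀ i, 2 ≤ i → i ≤ k - 1 → x' i = s i → ∀ j, 1 ≤ j → j < i → x' j = 0)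
    -- `x` is the greedy presentation of `m₂`
    (x : ℕ → ℕ)
    (hxsum : ∑ i ∈ Finset.Icc 1 k, b i * x i = m₂)
    (hxk : x k = m₂ / b k)
    (hxle : ∀ i, 1 ≤ i → i ≤ k - 1 → x i ≤ s i)
    (hxzero : ∀ i, 2 ≤ i → i ≤ k - 1 → x i = s i → ∀ j, 1 ≤ j → j < i → x j = 0)
    -- `X(m₁) ⪯ X(m₂)` in the colexicographic order
    (hcolex : (∀ i, 1 ≤ i → i ≤ k → x' i = x i) ∨
      (∃ j, 1 ≤ j ∧ j ≤ k ∧ x' j < x j ∧ ∀ i, j < i → i ≤ k → x' i = x i)) :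
    (∑ i ∈ Finset.Icc 1 k, (u * b i + 1) * x' i ≤
      ∑ i ∈ Finset.Icc 1 k, (u * b i + 1) * x i) ∧
    (m₁ ≠ m₂ → (∀ i, 1 ≤ i → i ≤ k - 1 → s i < u + 1) →
      ∑ i ∈ Finset.Icc 1 k, (u * b i + 1) * x' i <
        ∑ i ∈ Finset.Icc 1 k, (u * b i + 1) * x i) :=
  stmt_4_general k u b s hbrec hsu m₁ m₂ x' hx'sum hx'le hx'zero x hxsum hcolex
end

section
/- Let ⟨A⟩ be a GCNS numerical semigroup with parameters a, k, d, u, B = (b_1,...,b_k), s_1 ≤ ⋯ ≤ s_{k−1}, and let p be a positive divisor of a with p ≠ a. Let X(a−p) = (x_1, x_2, ..., x_k) be the greedy presentation of a − p. If u*a + d + k − 2 ≥ Σ_{i=1}^{k−1} s_i, a + p*d ≥ 0, and s_i < u + 1 for all 1 ≤ i ≤ k−1, then the Frobenius number of the quotient is F(⟨A⟩/p) = (Σ_{i=1}^k x_i) * (a/p) + (a/p − 1)*(u*a + d) − a/p. -/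
/-!
Put `c = u a + d`, so that the generators are `a` and `a + b_i c`. Greedy change-making is optimal
for the coins `b_i`, so `⟨A⟩ = {Y a + Z c | Y ≥ G Z}`, where `G Z` is the number of coins the
greedy algorithm uses for `Z`. Two estimates on `G` drive the proof: enlarging the amount lowers
`G` by at most `Σ s_i - (k - 2) ≤ c`, and adding one unit lowers it by at most
`s_{k-1} - 1 ≤ u - 1`.

Let `q = a / p`. By the first estimate and `gcd(a, c) = 1`, `p F = G(a - p) a + (a - p) c - a` is
not in `⟨A⟩`. By the second and `(u - 1) a ≤ c` (from `a + p d ≥ 0`), the elements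
`G(p W) q + W c` of `⟨A⟩/p` with `W < q` are at most `F + q`; since `gcd(q, c) = 1` they meet every
class mod `q`, so every integer above `F` lies in `⟨A⟩/p`.
-/

theorem add_nsmul_le_of_forall_add_le {M : Type*} [AddCommMonoid M] [PartialOrder M]
    [IsOrderedAddMonoid M] (f : ℕ → M) {m : ℕ} {c d : M} (h : ∀ n, f n + c ≤ f (n + m) + d)
    (n t : ℕ) : f n + t • c ≤ f (n + t * m) + t • d := by
  induction t with
  | zero => simp
  | succ t ih =>
    calc f n + (t + 1) • c = (f n + t • c) + c := by rw [succ_nsmul, add_assoc]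
      _ ≤ (f (n + t * m) + t • d) + c := add_le_add ih le_rfl
      _ = (f (n + t * m) + c) + t • d := add_right_comm _ _ _
      _ ≤ (f (n + t * m + m) + d) + t • d := add_le_add (h _) le_rfl
      _ = f (n + (t + 1) * m) + (t + 1) • d := by
          rw [succ_nsmul, add_mul, one_mul, add_assoc n, add_right_comm, add_assoc]

/-- The number of coins the greedy algorithm uses to pay `Z` with coins `b 1, …, b j`. -/
def greedyCount (b : ℕ → ℕ) : ℕ → ℕ → ℕ
  | 0, _ => 0
  | j + 1, Z => Z / b (j + 1) + greedyCount b j (Z % b (j + 1))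

section greedyCount

variable {b : ℕ → ℕ} {j : ℕ}

theorem greedyCount_succ (b : ℕ → ℕ) (j Z : ℕ) :
    greedyCount b (j + 1) Z = Z / b (j + 1) + greedyCount b j (Z % b (j + 1)) := rfl

@[simp]
theorem greedyCount_zero_right (b : ℕ → ℕ) (j : ℕ) : greedyCount b j 0 = 0 := by
  induction j with
  | zero => rfl
  | succ j ih => simp [greedyCount_succ, ih]

theorem greedyCount_one (hb1 : b 1 = 1) (Z : ℕ) : greedyCount b 1 Z = Z := by
  simp [hb1, greedyCount]

theorem greedyCount_mul_add (hj : j ≠ 0) (hb : 0 < b j) (t Z : ℕ) :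
    greedyCount b j (b j * t + Z) = t + greedyCount b j Z := by
  obtain ⟨i, rfl⟩ := Nat.exists_eq_add_one_of_ne_zero hj
  rw [greedyCount_succ, greedyCount_succ, Nat.mul_add_div hb, Nat.mul_add_mod, add_assoc]

theorem greedyCount_succ_mul_add_of_lt {Z : ℕ} (hZ : Z < b (j + 1)) (t : ℕ) :
    greedyCount b (j + 1) (b (j + 1) * t + Z) = t + greedyCount b j Z := by
  rw [greedyCount_succ, Nat.mul_add_div (by omega), Nat.mul_add_mod, Nat.div_eq_of_lt hZ,
    Nat.mod_eq_of_lt hZ, add_zero]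

theorem greedyCount_succ_add_one_le {σ : ℕ} (hj : j ≠ 0) (hbj : 0 < b j)
    (hrec : b (j + 1) = σ * b j + 1)
    (h : ∀ r, greedyCount b j r + 1 ≤ greedyCount b j (r + 1) + σ) (Z : ℕ) :
    greedyCount b (j + 1) Z + 1 ≤ greedyCount b (j + 1) (Z + 1) + σ := by
  obtain ⟨t, r, hr, rfl⟩ : ∃ t r, r < b (j + 1) ∧ Z = b (j + 1) * t + r :=
    ⟨_, _, Nat.mod_lt Z (by omega), (Nat.div_add_mod Z _).symm⟩
  rw [greedyCount_succ_mul_add_of_lt hr, add_assoc (b (j + 1) * t)]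
  rcases Nat.lt_or_ge (r + 1) (b (j + 1)) with hlt | hge
  · rw [greedyCount_succ_mul_add_of_lt hlt]
    have := h r
    omega
  · -- carry: `r = σ * b j` is paid with `σ` coins, and `r + 1` with one coin `b (j + 1)`
    have hσ : greedyCount b j (b j * σ + 0) = σ := by
      rw [greedyCount_mul_add hj hbj, greedyCount_zero_right, add_zero]
    have hr : r = b j * σ + 0 := by rw [mul_comm]; omega
    have hcarry : r + 1 = b (j + 1) * 1 + 0 := by omega
    rw [hcarry, ← add_assoc, ← mul_add, greedyCount_succ_mul_add_of_lt (by omega),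
      greedyCount_zero_right, hr, hσ]
    omega

theorem greedyCount_sum_eq_of_partial_sum_lt (x : ℕ → ℕ)
    (hx : ∀ i < j, ∑ l ∈ Finset.Icc 1 i, b l * x l < b (i + 1)) :
    greedyCount b j (∑ i ∈ Finset.Icc 1 j, b i * x i) = ∑ i ∈ Finset.Icc 1 j, x i := by
  induction j with
  | zero => simp
  | succ j ih =>
    rw [Finset.sum_Icc_succ_top (by omega), Finset.sum_Icc_succ_top (by omega),
      add_comm (∑ i ∈ Finset.Icc 1 j, b i * x i), greedyCount_succ_mul_add_of_lt (hx j (by omega)),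
      ih fun i hi => hx i (by omega), add_comm]

theorem exists_sum_eq_greedyCount (hb1 : b 1 = 1) (hj : 1 ≤ j) (Z : ℕ) :
    ∃ y : ℕ → ℕ, ∑ i ∈ Finset.Icc 1 j, b i * y i = Z ∧
      ∑ i ∈ Finset.Icc 1 j, y i = greedyCount b j Z := by
  induction j, hj using Nat.le_induction generalizing Z with
  | base => exact ⟨fun _ => Z, by simp [hb1], by simp [greedyCount_one hb1]⟩
  | succ j hj ih =>
    obtain ⟨y, hyZ, hyG⟩ := ih (Z % b (j + 1))
    have hy : ∀ i ∈ Finset.Icc 1 j, Function.update y (j + 1) (Z / b (j + 1)) i = y i :=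
      fun i hi => Function.update_of_ne (by simp at hi; omega) _ _
    refine ⟨Function.update y (j + 1) (Z / b (j + 1)), ?_, ?_⟩
    · rw [Finset.sum_Icc_succ_top (by omega), Finset.sum_congr rfl fun i hi => by rw [hy i hi],
        hyZ, Function.update_self, add_comm, Nat.div_add_mod]
    · rw [Finset.sum_Icc_succ_top (by omega), Finset.sum_congr rfl hy, hyG, Function.update_self,
        greedyCount_succ, add_comm]

end greedyCount

theorem le_sum_Icc_of_one_le {s : ℕ → ℕ} {j : ℕ} (hs : ∀ i, 1 ≤ i → i ≤ j → 1 ≤ s i) :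
    j ≤ ∑ i ∈ Finset.Icc 1 j, s i := by
  simpa using Finset.card_nsmul_le_sum (Finset.Icc 1 j) s 1 fun i hi => by
    simp only [Finset.mem_Icc] at hi; exact hs i hi.1 hi.2

section CoinChain

variable {b s : ℕ → ℕ} {k : ℕ}

theorem coin_pos_of_chain (hb1 : b 1 = 1)
    (hbrec : ∀ i, 1 ≤ i → i ≤ k - 1 → b (i + 1) = s i * b i + 1)
    {i : ℕ} (hi : 1 ≤ i) (hik : i ≤ k) : 0 < b i := by
  induction i, hi using Nat.le_induction with
  | base => omega
  | succ i hi _ => rw [hbrec i hi (by omega)]; omega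

theorem greedyCount_add_one_le (hb1 : b 1 = 1)
    (hbrec : ∀ i, 1 ≤ i → i ≤ k - 1 → b (i + 1) = s i * b i + 1)
    (hsmono : ∀ i, 2 ≤ i → i ≤ k - 1 → s (i - 1) ≤ s i)
    {j : ℕ} (hj : 1 ≤ j) (hjk : j ≤ k - 1) (Z : ℕ) :
    greedyCount b j Z + 1 ≤ greedyCount b j (Z + 1) + s j := by
  induction j, hj using Nat.le_induction generalizing Z with
  | base => rw [greedyCount_one hb1, greedyCount_one hb1]; omega
  | succ j hj ih =>
    have hstep := greedyCount_succ_add_one_le (by omega) (coin_pos_of_chain hb1 hbrec hj (by omega))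
      (hbrec j hj (by omega)) (ih (by omega)) Z
    have hmono := hsmono (j + 1) (by omega) hjk
    rw [Nat.add_sub_cancel] at hmono
    omega

theorem greedyCount_top_add_one_le (hk : 2 ≤ k) (hb1 : b 1 = 1)
    (hbrec : ∀ i, 1 ≤ i → i ≤ k - 1 → b (i + 1) = s i * b i + 1)
    (hsmono : ∀ i, 2 ≤ i → i ≤ k - 1 → s (i - 1) ≤ s i) (Z : ℕ) :
    greedyCount b k Z + 1 ≤ greedyCount b k (Z + 1) + s (k - 1) := by
  obtain ⟨j, rfl⟩ : ∃ j, k = j + 1 := ⟨k - 1, by omega⟩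
  rw [Nat.add_sub_cancel]
  exact greedyCount_succ_add_one_le (by omega) (coin_pos_of_chain hb1 hbrec (by omega) (by omega))
    (hbrec j (by omega) (by omega))
    (greedyCount_add_one_le hb1 hbrec hsmono (by omega) (by omega)) Z

theorem greedyCount_add_le_add_mul (hk : 2 ≤ k) (hb1 : b 1 = 1)
    (hbrec : ∀ i, 1 ≤ i → i ≤ k - 1 → b (i + 1) = s i * b i + 1)
    (hsmono : ∀ i, 2 ≤ i → i ≤ k - 1 → s (i - 1) ≤ s i) (Z n : ℕ) :
    greedyCount b k Z + n ≤ greedyCount b k (Z + n) + n * s (k - 1) := by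
  simpa using add_nsmul_le_of_forall_add_le (greedyCount b k)
    (greedyCount_top_add_one_le hk hb1 hbrec hsmono) Z n

theorem greedyCount_add_coin (hb1 : b 1 = 1)
    (hbrec : ∀ i, 1 ≤ i → i ≤ k - 1 → b (i + 1) = s i * b i + 1)
    (hsmono : ∀ i, 2 ≤ i → i ≤ k - 1 → s (i - 1) ≤ s i)
    {j : ℕ} (hj : 1 ≤ j) (hjk : j ≤ k - 1) (Z : ℕ) :
    greedyCount b j Z + 1 ≤ greedyCount b j (Z + b (j + 1)) := by
  rw [hbrec j hj hjk, show Z + (s j * b j + 1) = b j * s j + (Z + 1) by ring,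
    greedyCount_mul_add (by omega) (coin_pos_of_chain hb1 hbrec hj (by omega))]
  have := greedyCount_add_one_le hb1 hbrec hsmono hj hjk Z
  omega

theorem greedyCount_succ_le (hb1 : b 1 = 1)
    (hbrec : ∀ i, 1 ≤ i → i ≤ k - 1 → b (i + 1) = s i * b i + 1)
    (hsmono : ∀ i, 2 ≤ i → i ≤ k - 1 → s (i - 1) ≤ s i)
    {j : ℕ} (hj : 1 ≤ j) (hjk : j ≤ k - 1) (Z : ℕ) :
    greedyCount b (j + 1) Z ≤ greedyCount b j Z := by
  obtain ⟨t, r, hr, rfl⟩ : ∃ t r, r < b (j + 1) ∧ Z = b (j + 1) * t + r :=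
    ⟨_, _, Nat.mod_lt Z (coin_pos_of_chain hb1 hbrec (by omega) (by omega)),
      (Nat.div_add_mod Z _).symm⟩
  have := add_nsmul_le_of_forall_add_le (greedyCount b j)
    (fun Z => (greedyCount_add_coin hb1 hbrec hsmono hj hjk Z).trans_eq (add_zero _).symm) r t
  rw [greedyCount_succ_mul_add_of_lt hr, add_comm (b (j + 1) * t), mul_comm]
  simpa [add_comm] using this

theorem greedyCount_sum_le (hb1 : b 1 = 1)
    (hbrec : ∀ i, 1 ≤ i → i ≤ k - 1 → b (i + 1) = s i * b i + 1)
    (hsmono : ∀ i, 2 ≤ i → i ≤ k - 1 → s (i - 1) ≤ s i)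
    {j : ℕ} (hj : 1 ≤ j) (hjk : j ≤ k) (y : ℕ → ℕ) :
    greedyCount b j (∑ i ∈ Finset.Icc 1 j, b i * y i) ≤ ∑ i ∈ Finset.Icc 1 j, y i := by
  induction j, hj using Nat.le_induction with
  | base => simp [greedyCount_one hb1, hb1]
  | succ j hj ih =>
    rw [Finset.sum_Icc_succ_top (by omega), Finset.sum_Icc_succ_top (by omega),
      add_comm (∑ i ∈ Finset.Icc 1 j, b i * y i),
      greedyCount_mul_add (by omega) (coin_pos_of_chain hb1 hbrec (by omega) hjk)]
    have := greedyCount_succ_le hb1 hbrec hsmono hj (by omega) (∑ i ∈ Finset.Icc 1 j, b i * y i)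
    have := ih (by omega)
    omega

theorem greedyCount_add_le_sum_of_lt (hb1 : b 1 = 1)
    (hbrec : ∀ i, 1 ≤ i → i ≤ k - 1 → b (i + 1) = s i * b i + 1)
    (hs1 : ∀ i, 1 ≤ i → i ≤ k - 1 → 1 ≤ s i)
    {j : ℕ} (hj : 1 ≤ j) (hjk : j ≤ k - 1) {r : ℕ} (hr : r < b (j + 1)) :
    greedyCount b j r + j ≤ ∑ i ∈ Finset.Icc 1 j, s i + 1 := by
  induction j, hj using Nat.le_induction generalizing r with
  | base =>
    rw [hbrec 1 le_rfl hjk, hb1] at hr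
    rw [greedyCount_one hb1, Finset.Icc_self, Finset.sum_singleton]
    omega
  | succ j hj ih =>
    have hb := coin_pos_of_chain hb1 hbrec (show 1 ≤ j + 1 by omega) (by omega)
    obtain ⟨t, r, hr', rfl⟩ : ∃ t r', r' < b (j + 1) ∧ r = b (j + 1) * t + r' :=
      ⟨_, _, Nat.mod_lt r hb, (Nat.div_add_mod r _).symm⟩
    rw [hbrec (j + 1) (by omega) hjk] at hr
    have ht : t ≤ s (j + 1) :=
      Nat.le_of_mul_le_mul_left (by rw [mul_comm (b _) (s _)]; omega) hb
    have hsum : j ≤ ∑ i ∈ Finset.Icc 1 j, s i :=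
      le_sum_Icc_of_one_le fun i hi hij => hs1 i hi (by omega)
    rw [greedyCount_succ_mul_add_of_lt hr', Finset.sum_Icc_succ_top (by omega)]
    rcases ht.lt_or_eq with ht | rfl
    · have := ih (by omega) hr'
      omega
    · have : r = 0 := by rw [mul_comm (b _) (s _)] at hr; omega
      subst this
      rw [greedyCount_zero_right]
      omega

theorem greedyCount_add_le_of_le (hk : 2 ≤ k) (hb1 : b 1 = 1)
    (hbrec : ∀ i, 1 ≤ i → i ≤ k - 1 → b (i + 1) = s i * b i + 1)
    (hs1 : ∀ i, 1 ≤ i → i ≤ k - 1 → 1 ≤ s i) {A B : ℕ} (hAB : A ≤ B) :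
    greedyCount b k A + k ≤ greedyCount b k B + ∑ i ∈ Finset.Icc 1 (k - 1), s i + 2 := by
  obtain ⟨j, rfl⟩ : ∃ j, k = j + 1 := ⟨k - 1, by omega⟩
  rw [Nat.add_sub_cancel, greedyCount_succ, greedyCount_succ]
  have hcap := greedyCount_add_le_sum_of_lt hb1 hbrec hs1 (by omega) (by omega)
    (Nat.mod_lt A (coin_pos_of_chain hb1 hbrec (show 1 ≤ j + 1 by omega) le_rfl))
  have := Nat.div_le_div_right (c := b (j + 1)) hAB
  omega

theorem sum_Icc_mul_lt_of_greedy (hb1 : b 1 = 1)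
    (hbrec : ∀ i, 1 ≤ i → i ≤ k - 1 → b (i + 1) = s i * b i + 1) {x : ℕ → ℕ}
    (hxle : ∀ i, 1 ≤ i → i ≤ k - 1 → x i ≤ s i)
    (hxzero : ∀ i, 2 ≤ i → i ≤ k - 1 → x i = s i → ∀ j, 1 ≤ j → j < i → x j = 0)
    {j : ℕ} (hj : 1 ≤ j) (hjk : j ≤ k - 1) :
    ∑ i ∈ Finset.Icc 1 j, b i * x i < b (j + 1) := by
  induction j, hj using Nat.le_induction with
  | base =>
    have := hxle 1 le_rfl hjk
    rw [Finset.Icc_self, Finset.sum_singleton, hbrec 1 le_rfl hjk, hb1]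
    omega
  | succ j hj ih =>
    rw [Finset.sum_Icc_succ_top (by omega), hbrec (j + 1) (by omega) hjk, mul_comm (s _)]
    have hxs := hxle (j + 1) (by omega) hjk
    rcases hxs.lt_or_eq with hlt | heq
    · have := ih (by omega)
      have := Nat.mul_le_mul_left (b (j + 1)) (show x (j + 1) + 1 ≤ s (j + 1) by omega)
      rw [mul_add_one] at this
      omega
    · rw [Finset.sum_eq_zero fun i hi => by
        simp only [Finset.mem_Icc] at hi
        rw [hxzero (j + 1) (by omega) hjk heq i hi.1 (by omega), mul_zero], heq]
      omega

theorem greedyCount_eq_sum_of_greedy (hb1 : b 1 = 1)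
    (hbrec : ∀ i, 1 ≤ i → i ≤ k - 1 → b (i + 1) = s i * b i + 1) {x : ℕ → ℕ}
    (hxle : ∀ i, 1 ≤ i → i ≤ k - 1 → x i ≤ s i)
    (hxzero : ∀ i, 2 ≤ i → i ≤ k - 1 → x i = s i → ∀ j, 1 ≤ j → j < i → x j = 0) :
    greedyCount b k (∑ i ∈ Finset.Icc 1 k, b i * x i) = ∑ i ∈ Finset.Icc 1 k, x i := by
  refine greedyCount_sum_eq_of_partial_sum_lt x fun i hi => ?_
  rcases Nat.eq_zero_or_pos i with rfl | hi0
  · simp [hb1]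
  · exact sum_Icc_mul_lt_of_greedy hb1 hbrec hxle hxzero hi0 (by omega)

end CoinChain

def epigraphImage (G : ℕ → ℕ) (a c : ℤ) : Set ℤ :=
  {m | ∃ Y Z : ℕ, G Z ≤ Y ∧ m = Y * a + Z * c}

theorem exists_gcns_repr_iff_mem_epigraphImage {b s : ℕ → ℕ} {k : ℕ} (hk : 1 ≤ k)
    (hb1 : b 1 = 1) (hbrec : ∀ i, 1 ≤ i → i ≤ k - 1 → b (i + 1) = s i * b i + 1)
    (hsmono : ∀ i, 2 ≤ i → i ≤ k - 1 → s (i - 1) ≤ s i) (a u d m : ℤ) :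
    (∃ y : ℕ → ℕ,
        m = (y 0 : ℤ) * a + ∑ i ∈ Finset.Icc 1 k, (y i : ℤ) * ((u * b i + 1) * a + d * b i)) ↔
      m ∈ epigraphImage (greedyCount b k) a (u * a + d) := by
  -- each generator `(u * b i + 1) * a + d * b i` is `a + b i * (u * a + d)`
  have hsum : ∀ y : ℕ → ℕ, ∑ i ∈ Finset.Icc 1 k, (y i : ℤ) * ((u * b i + 1) * a + d * b i) =
      ((∑ i ∈ Finset.Icc 1 k, y i : ℕ) : ℤ) * a +
        ((∑ i ∈ Finset.Icc 1 k, b i * y i : ℕ) : ℤ) * (u * a + d) := fun y => by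
    push_cast
    rw [Finset.sum_mul, Finset.sum_mul, ← Finset.sum_add_distrib]
    exact Finset.sum_congr rfl fun i _ => by ring
  constructor
  · rintro ⟨y, rfl⟩
    refine ⟨y 0 + ∑ i ∈ Finset.Icc 1 k, y i, ∑ i ∈ Finset.Icc 1 k, b i * y i,
      (greedyCount_sum_le hb1 hbrec hsmono hk le_rfl y).trans (Nat.le_add_left _ _), ?_⟩
    rw [hsum]
    push_cast
    ring
  · rintro ⟨Y, Z, hYZ, rfl⟩
    obtain ⟨w, hwZ, hwG⟩ := exists_sum_eq_greedyCount hb1 hk Z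
    have hyw : ∀ i ∈ Finset.Icc 1 k, (if i = 0 then Y - greedyCount b k Z else w i) = w i :=
      fun i hi => if_neg (by simp only [Finset.mem_Icc] at hi; omega)
    refine ⟨fun i => if i = 0 then Y - greedyCount b k Z else w i, ?_⟩
    rw [hsum]
    beta_reduce
    rw [Finset.sum_congr rfl hyw, Finset.sum_congr rfl fun i hi => congrArg (b i * ·) (hyw i hi),
      hwZ, hwG, if_pos rfl]
    push_cast [hYZ]
    ring

theorem mul_add_mul_sub_notMem_epigraphImage {G : ℕ → ℕ} {a c : ℤ} (hac : IsCoprime a c)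
    (hc : 0 ≤ c) (hcap : ∀ A B, A ≤ B → (G A : ℤ) ≤ G B + c) {N : ℕ} (hN : (N : ℤ) < a) :
    (G N : ℤ) * a + N * c - a ∉ epigraphImage G a c := by
  rintro ⟨Y, Z, hYZ, h⟩
  have ha : 0 < a := by omega
  obtain ⟨t, ht⟩ : a ∣ (N : ℤ) - Z :=
    hac.dvd_of_dvd_mul_right ⟨Y + 1 - G N, by linear_combination h⟩
  have hcount : (Y : ℤ) + 1 - G N = t * c :=
    mul_left_cancel₀ ha.ne' (by linear_combination -h + c * ht)
  have hYZ' : (G Z : ℤ) ≤ Y := by exact_mod_cast hYZ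
  have ht0 : t ≤ 0 := by nlinarith
  rcases ht0.lt_or_eq with ht0 | rfl
  · have hNZ : N ≤ Z := by exact_mod_cast (show (N : ℤ) ≤ Z by nlinarith)
    have := hcap N Z hNZ
    nlinarith
  · have : Z = N := by omega
    subst this
    omega

theorem exists_lt_dvd_sub_mul {q : ℕ} {c : ℤ} (hq : 0 < q) (hqc : IsCoprime (q : ℤ) c) (n : ℤ) :
    ∃ W < q, (q : ℤ) ∣ n - W * c := by
  obtain ⟨α, β, hαβ⟩ := hqc
  have hW := Int.emod_nonneg (β * n) (show (q : ℤ) ≠ 0 by omega)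
  have hWq := Int.emod_lt_of_pos (β * n) (show 0 < (q : ℤ) by omega)
  refine ⟨((β * n) % q).toNat, by omega, n * α + β * n / q * c, ?_⟩
  rw [Int.toNat_of_nonneg hW, Int.emod_def]
  linear_combination -n * hαβ

theorem mul_mem_epigraphImage {G : ℕ → ℕ} {p q : ℕ} {c : ℤ} (hq : 0 < q)
    (hqc : IsCoprime (q : ℤ) c) (hdrop : ∀ Z, (G Z : ℤ) * q ≤ G (Z + p) * q + c) {n : ℕ}
    (hn : (G (p * (q - 1)) : ℤ) * q + (q - 1) * c - q < n) :
    (p * n : ℤ) ∈ epigraphImage G (p * q) c := by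
  obtain ⟨W, hW, hdvd⟩ := exists_lt_dvd_sub_mul hq hqc n
  obtain ⟨e, he⟩ : (q : ℤ) ∣ n - W * c - G (p * W) * q := dvd_sub hdvd (dvd_mul_left _ _)
  have hiter := add_nsmul_le_of_forall_add_le (fun Z => (G Z : ℤ) * q) (c := 0)
    (fun Z => by simpa using hdrop Z) (p * W) (q - 1 - W)
  rw [show p * W + (q - 1 - W) * p = p * (q - 1) by
    rw [mul_comm _ p, ← mul_add]; congr 1; omega] at hiter
  simp only [smul_zero, add_zero, nsmul_eq_mul] at hiter
  have hcast : ((q - 1 - W : ℕ) : ℤ) = q - 1 - W := by omega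
  rw [hcast] at hiter
  have he0 : 0 ≤ e := by
    by_contra! he0
    nlinarith
  lift e to ℕ using he0
  refine ⟨e + G (p * W), p * W, by omega, ?_⟩
  push_cast
  linear_combination (p : ℤ) * he

theorem isGreatest_notMem_epigraphImage {G : ℕ → ℕ} {p q : ℕ} {c : ℤ} (hp : 0 < p)
    (hq : 0 < q) (hc : 1 ≤ c) (hac : IsCoprime ((p : ℤ) * q) c)
    (hcap : ∀ A B, A ≤ B → (G A : ℤ) ≤ G B + c)
    (hdrop : ∀ Z, (G Z : ℤ) * q ≤ G (Z + p) * q + c) :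
    IsGreatest {z : ℤ | ¬ ∃ n : ℕ, (n : ℤ) = z ∧ (p * n : ℤ) ∈ epigraphImage G (p * q) c}
      ((G (p * (q - 1)) : ℤ) * q + (q - 1) * c - q) := by
  have hq1 : ((q - 1 : ℕ) : ℤ) = q - 1 := by omega
  constructor
  · rintro ⟨n, hn, hmem⟩
    refine mul_add_mul_sub_notMem_epigraphImage hac (by omega) hcap
      (N := p * (q - 1)) (by push_cast [hq1]; nlinarith) ?_
    rw [hn] at hmem
    convert hmem using 1
    push_cast [hq1]
    ring
  · intro z hz
    by_contra! hlt
    have hF : -1 ≤ (G (p * (q - 1)) : ℤ) * q + (q - 1) * c - q := by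
      have : (0 : ℤ) ≤ (q - 1) * (c - 1) := mul_nonneg (by omega) (by omega)
      nlinarith [Int.natCast_nonneg (G (p * (q - 1)))]
    have hz0 : (z.toNat : ℤ) = z := Int.toNat_of_nonneg (by omega)
    exact hz ⟨z.toNat, hz0, mul_mem_epigraphImage hq hac.of_mul_left_right hdrop (hz0 ▸ hlt)⟩

theorem stmt_5_general (a k u p : ℕ) (d : ℤ) (b s : ℕ → ℕ)
    (ha : 2 ≤ a) (hk : 2 ≤ k)
    (hgcd : Int.gcd (a : ℤ) d = 1)
    (hb1 : b 1 = 1)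
    (hbrec : ∀ i, 1 ≤ i → i ≤ k - 1 → b (i + 1) = s i * b i + 1)
    (hs1 : ∀ i, 1 ≤ i → i ≤ k - 1 → 1 ≤ s i)
    (hsmono : ∀ i, 2 ≤ i → i ≤ k - 1 → s (i - 1) ≤ s i)
    (hp : 0 < p) (hpa : p ∣ a)
    (hcond : (∑ i ∈ Finset.Icc 1 (k - 1), (s i : ℤ)) ≤ (u : ℤ) * a + d + k - 2)
    (hapd : 0 ≤ (a : ℤ) + p * d)
    (hsu : ∀ i, 1 ≤ i → i ≤ k - 1 → s i < u + 1)
    -- `x` is the greedy presentation of `a - p`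
    (x : ℕ → ℕ)
    (hxsum : ∑ i ∈ Finset.Icc 1 k, b i * x i = a - p)
    (hxle : ∀ i, 1 ≤ i → i ≤ k - 1 → x i ≤ s i)
    (hxzero : ∀ i, 2 ≤ i → i ≤ k - 1 → x i = s i → ∀ j, 1 ≤ j → j < i → x j = 0) :
    IsGreatest {z : ℤ | ¬ ∃ n : ℕ, (n : ℤ) = z ∧
        ∃ y : ℕ → ℕ, (p * n : ℤ) = (y 0 : ℤ) * a +
          ∑ i ∈ Finset.Icc 1 k, (y i : ℤ) * (((u : ℤ) * b i + 1) * a + d * b i)}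
      (((∑ i ∈ Finset.Icc 1 k, x i : ℕ) : ℤ) * ((a / p : ℕ) : ℤ) +
        (((a / p : ℕ) : ℤ) - 1) * ((u : ℤ) * a + d) - ((a / p : ℕ) : ℤ)) := by
  obtain ⟨q, rfl⟩ := hpa
  have hq : 0 < q := Nat.pos_of_ne_zero (by rintro rfl; omega)
  push_cast at hcond hapd
  have hc : 1 ≤ (u : ℤ) * (p * q) + d := by
    have := le_sum_Icc_of_one_le hs1
    zify [show 1 ≤ k by omega] at this
    linarith
  have hcap : ∀ A B, A ≤ B → (greedyCount b k A : ℤ) ≤ greedyCount b k B + (u * (p * q) + d) :=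
    fun A B hAB => by
      have := greedyCount_add_le_of_le hk hb1 hbrec hs1 hAB
      zify at this
      linarith
  have hdrop : ∀ Z,
      (greedyCount b k Z : ℤ) * q ≤ greedyCount b k (Z + p) * q + (u * (p * q) + d) := fun Z => by
    have h := greedyCount_add_le_add_mul hk hb1 hbrec hsmono Z p
    have hsu' := hsu (k - 1) (by omega) le_rfl
    have : ((greedyCount b k Z : ℤ) + p) * q ≤ (greedyCount b k (Z + p) + p * u) * q :=
      mul_le_mul_of_nonneg_right (by exact_mod_cast h.trans (by gcongr; omega)) (by positivity)
    rcases le_or_gt 0 d with hd | hd <;> nlinarith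
  have hac : IsCoprime ((p : ℤ) * q) (u * (p * q) + d) := by
    have := (Int.isCoprime_iff_gcd_eq_one.mpr hgcd).add_mul_left_right u
    push_cast at this
    rwa [add_comm, mul_comm _ (u : ℤ)] at this
  rw [Nat.mul_div_cancel_left q hp, ← greedyCount_eq_sum_of_greedy hb1 hbrec hxle hxzero,
    hxsum, ← Nat.mul_sub_one]
  simp only [exists_gcns_repr_iff_mem_epigraphImage (by omega : 1 ≤ k) hb1 hbrec hsmono]
  push_cast
  exact isGreatest_notMem_epigraphImage hp hq hc hac hcap hdrop

/-- Frobenius number of the quotient of a GCNS numerical semigroup.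
If `u·a + d + k − 2 ≥ Σ s_i`, `a + p·d ≥ 0`, and `s_i < u + 1` for all `i`, then
`F(⟨A⟩/p) = (Σ x_i)·(a/p) + (a/p − 1)·(u·a + d) − a/p`, where `(x_1,…,x_k)` is the
greedy presentation of `a − p`. -/
theorem stmt_5 (a k u p : ℕ) (d : ℤ) (b s : ℕ → ℕ)
    (ha : 2 ≤ a) (hk : 2 ≤ k) (hu : 1 ≤ u)
    (hd : d ≠ 0) (hgcd : Int.gcd (a : ℤ) d = 1)
    (hb1 : b 1 = 1)
    (hbrec : ∀ i, 1 ≤ i → i ≤ k - 1 → b (i + 1) = s i * b i + 1)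
    (hs1 : ∀ i, 1 ≤ i → i ≤ k - 1 → 1 ≤ s i)
    (hsmono : ∀ i, 2 ≤ i → i ≤ k - 1 → s (i - 1) ≤ s i)
    (hneg : d < 0 → ∀ i, 1 ≤ i → i ≤ k →
      1 < ((u : ℤ) * b i + 1) * a + d * b i)
    (hp : 0 < p) (hpa : p ∣ a) (hpne : p ≠ a)
    (hcond : (∑ i ∈ Finset.Icc 1 (k - 1), (s i : ℤ)) ≤ (u : ℤ) * a + d + k - 2)
    (hapd : 0 ≤ (a : ℤ) + p * d)
    (hsu : ∀ i, 1 ≤ i → i ≤ k - 1 → s i < u + 1)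
    -- `x` is the greedy presentation of `a - p`
    (x : ℕ → ℕ)
    (hxsum : ∑ i ∈ Finset.Icc 1 k, b i * x i = a - p)
    (hxk : x k = (a - p) / b k)
    (hxle : ∀ i, 1 ≤ i → i ≤ k - 1 → x i ≤ s i)
    (hxzero : ∀ i, 2 ≤ i → i ≤ k - 1 → x i = s i → ∀ j, 1 ≤ j → j < i → x j = 0) :
    IsGreatest {z : ℤ | ¬ ∃ n : ℕ, (n : ℤ) = z ∧
        ∃ y : ℕ → ℕ, (p * n : ℤ) = (y 0 : ℤ) * a +
          ∑ i ∈ Finset.Icc 1 k, (y i : ℤ) * (((u : ℤ) * b i + 1) * a + d * b i)}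
      (((∑ i ∈ Finset.Icc 1 k, x i : ℕ) : ℤ) * ((a / p : ℕ) : ℤ) +
        (((a / p : ℕ) : ℤ) - 1) * ((u : ℤ) * a + d) - ((a / p : ℕ) : ℤ)) :=
  stmt_5_general a k u p d b s ha hk hgcd hb1 hbrec hs1 hsmono hp hpa hcond hapd hsu x hxsum hxle
    hxzero
end

section
/- Let ⟨A⟩ be a GCNS numerical semigroup with parameters a, k, d, u, B = (b_1,...,b_k), s_1 ≤ ⋯ ≤ s_{k−1}, and let p be a positive divisor of a with p ≠ a. If u*a + d + k − 2 ≥ Σ_{i=1}^{k−1} s_i, then the genus of the quotient is g(⟨A⟩/p) = Σ_{r=1}^{a/p − 1} (Σ_{i=1}^k x_i)_{rp} + ((u*a + d − 1)/2) * (a/p − 1), where (Σ_{i=1}^k x_i)_{rp} denotes the sum of the coordinates of the greedy presentation X(r*p) of r*p. -/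
/-!
Write `c = u a + d`, so that the generators are `a` and `a + c b_i` and an element of `⟨A⟩` is
`m a + c M` with `M = Σ b_i y_i` and `m ≥ Σ y_i`. Greedy presentations minimise `Σ y_i` among all
presentations of `M`, and the hypothesis on `Σ s_i` bounds the non-top greedy digits by `c`;
with `gcd(a, c) = 1` this makes `(Σ x_i)_{rp} a + c r p` the least element of `⟨A⟩` in its class
modulo `a`. Hence, with `q = a / p` and `c r ≡ n (mod q)`, `p n ∈ ⟨A⟩` iff
`⌊n / q⌋ ≥ (Σ x_i)_{rp} + ⌊c r / q⌋`. Counting the gaps class by class and pairing `r` with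
`q - r`, for which `⌊c r / q⌋ + ⌊c (q - r) / q⌋ = c - 1`, gives the formula.
-/

open Finset

theorem ncard_setOf_mod_eq_and_div_lt {ι : Type*} {q : ℕ} {I : Finset ι} {σ : ι → ℕ}
    (hσ : Set.InjOn σ I) (hσq : ∀ i ∈ I, σ i < q) (g : ι → ℕ) :
    {n | ∃ i ∈ I, n % q = σ i ∧ n / q < g i}.ncard = ∑ i ∈ I, g i := by
  have hmod : ∀ i ∈ I, ∀ j, (σ i + q * j) % q = σ i := fun i hi j => by
    rw [Nat.add_mul_mod_self_left, Nat.mod_eq_of_lt (hσq i hi)]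
  have hdiv : ∀ i ∈ I, ∀ j, (σ i + q * j) / q = j := fun i hi j => by
    have := hσq i hi
    rw [Nat.add_mul_div_left _ _ (by omega), Nat.div_eq_of_lt this, zero_add]
  have hset : {n | ∃ i ∈ I, n % q = σ i ∧ n / q < g i} =
      ↑((I.sigma fun i => range (g i)).image fun ij => σ ij.1 + q * ij.2) := by
    ext n
    simp only [Set.mem_ofPred_eq, coe_image, Set.mem_image, mem_coe, mem_sigma, mem_range,
      Sigma.exists]
    constructor
    · rintro ⟨i, hi, hn, hlt⟩
      exact ⟨i, n / q, ⟨hi, hlt⟩, by rw [← hn, Nat.mod_add_div]⟩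
    · rintro ⟨i, j, ⟨hi, hj⟩, rfl⟩
      exact ⟨i, hi, hmod i hi j, by rwa [hdiv i hi j]⟩
  rw [hset, Set.ncard_coe_finset, card_image_of_injOn, card_sigma]
  · simp only [card_range]
  · rintro ⟨i, j⟩ hij ⟨i', j'⟩ hij' h
    simp only [coe_sigma, Set.mem_sigma_iff, mem_coe] at hij hij' h
    obtain rfl : i = i' := hσ hij.1 hij'.1 (by rw [← hmod i hij.1 j, h, hmod i' hij'.1 j'])
    obtain rfl : j = j' := by rw [← hdiv i hij.1 j, h, hdiv i hij'.1 j']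
    rfl

theorem div_add_div_add_one_of_add_eq_mul {x y c q : ℕ} (h : x + y = c * q) (hx : ¬ q ∣ x) :
    x / q + y / q + 1 = c := by
  have hq : 0 < q := Nat.pos_of_ne_zero fun hq => hx (by simp_all)
  have hrem : q ≤ x % q + y % q := by
    refine Nat.le_of_dvd ?_ ?_
    · have := Nat.pos_of_ne_zero (mt Nat.dvd_of_mod_eq_zero hx)
      omega
    · rw [Nat.dvd_iff_mod_eq_zero, ← Nat.add_mod, h, Nat.mul_mod_left]
  have := Nat.add_div (a := x) (b := y) hq
  rw [h, Nat.mul_div_cancel _ hq, if_pos hrem] at this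
  omega

theorem two_mul_sum_mul_div_add {c q : ℕ} (hcq : Nat.Coprime c q) :
    2 * ∑ r ∈ Icc 1 (q - 1), c * r / q + (q - 1) = c * (q - 1) := by
  have hrefl : ∑ r ∈ Icc 1 (q - 1), c * (q - r) / q = ∑ r ∈ Icc 1 (q - 1), c * r / q := by
    refine sum_nbij' (q - ·) (q - ·) ?_ ?_ ?_ ?_ fun _ _ => rfl <;>
      · intro r hr
        simp only [mem_Icc] at hr ⊢
        omega
  calc 2 * ∑ r ∈ Icc 1 (q - 1), c * r / q + (q - 1)
      = ∑ r ∈ Icc 1 (q - 1), (c * r / q + c * (q - r) / q + 1) := by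
        rw [sum_add_distrib, sum_add_distrib, hrefl, sum_const, Nat.card_Icc, smul_eq_mul]
        omega
    _ = ∑ r ∈ Icc 1 (q - 1), c := sum_congr rfl fun r hr => by
        have hr := mem_Icc.1 hr
        refine div_add_div_add_one_of_add_eq_mul ?_ fun h => ?_
        · rw [← mul_add]
          congr 1
          omega
        · exact Nat.not_dvd_of_pos_of_lt hr.1 (by omega) (hcq.symm.dvd_mul_left.1 h)
    _ = c * (q - 1) := by
        rw [sum_const, Nat.card_Icc, smul_eq_mul, mul_comm, Nat.add_sub_cancel]

-- For `j = k` this is the coordinate sum `(Σ x_i)_N` of the greedy presentation `X(N)`.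
def greedyDigitSum (b : ℕ → ℕ) : ℕ → ℕ → ℕ
  | 0, _ => 0
  | j + 1, N => N / b (j + 1) + greedyDigitSum b j (N % b (j + 1))

theorem greedyDigitSum_zero_right (b : ℕ → ℕ) (j : ℕ) : greedyDigitSum b j 0 = 0 := by
  induction j with
  | zero => rfl
  | succ j ih => simp [greedyDigitSum, ih]

theorem greedyDigitSum_one {b : ℕ → ℕ} (hb1 : b 1 = 1) (N : ℕ) : greedyDigitSum b 1 N = N := by
  simp [greedyDigitSum, hb1]

theorem greedyDigitSum_succ_mul_add {b : ℕ → ℕ} {j ρ : ℕ} (hρ : ρ < b (j + 1)) (Q : ℕ) :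
    greedyDigitSum b (j + 1) (Q * b (j + 1) + ρ) = Q + greedyDigitSum b j ρ := by
  have hpos : 0 < b (j + 1) := by omega
  rw [greedyDigitSum, add_comm (Q * _), Nat.add_mul_div_right _ _ hpos, Nat.div_eq_of_lt hρ,
    zero_add, Nat.add_mul_mod_self_right, Nat.mod_eq_of_lt hρ]

theorem greedyDigitSum_add_mul {b : ℕ → ℕ} {j : ℕ} (hj : 1 ≤ j) (hpos : 0 < b j) (N t : ℕ) :
    greedyDigitSum b j (N + t * b j) = greedyDigitSum b j N + t := by
  obtain ⟨i, rfl⟩ : ∃ i, j = i + 1 := ⟨j - 1, by omega⟩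
  have hρ : N % b (i + 1) < b (i + 1) := Nat.mod_lt _ hpos
  rw [← Nat.div_add_mod' N (b (i + 1)), add_right_comm, ← add_mul,
    greedyDigitSum_succ_mul_add hρ, greedyDigitSum_succ_mul_add hρ]
  ring

theorem greedyDigitSum_mul {b : ℕ → ℕ} {j : ℕ} (hj : 1 ≤ j) (hpos : 0 < b j) (t : ℕ) :
    greedyDigitSum b j (t * b j) = t := by
  simpa [greedyDigitSum_zero_right] using greedyDigitSum_add_mul hj hpos 0 t

-- `(u b_i + 1) a + d b_i = a + (u a + d) b_i`, so for `c = u a + d` this is `⟨A⟩`.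
def gcns (a c : ℕ) (b : ℕ → ℕ) (k : ℕ) : Set ℕ :=
  {N | ∃ y : ℕ → ℕ, N = y 0 * a + ∑ i ∈ Icc 1 k, y i * (a + c * b i)}

section Semigroup

variable {a c : ℕ} {b : ℕ → ℕ} {k : ℕ}

theorem sum_mul_add_mul (y : ℕ → ℕ) :
    ∑ i ∈ Icc 1 k, y i * (a + c * b i) =
      (∑ i ∈ Icc 1 k, y i) * a + c * ∑ i ∈ Icc 1 k, b i * y i := by
  rw [sum_mul, mul_sum, ← sum_add_distrib]
  exact sum_congr rfl fun i _ => by ring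

theorem mul_add_sum_mem_gcns (m : ℕ) (y : ℕ → ℕ) :
    m * a + ∑ i ∈ Icc 1 k, y i * (a + c * b i) ∈ gcns a c b k := by
  refine ⟨Function.update y 0 m, ?_⟩
  rw [Function.update_self]
  congr 1
  exact sum_congr rfl fun i hi => by
    rw [Function.update_of_ne (by have := (mem_Icc.1 hi).1; omega)]

theorem mul_mem_gcns (m : ℕ) : m * a ∈ gcns a c b k := by
  simpa using mul_add_sum_mem_gcns (a := a) (c := c) (b := b) (k := k) m 0

theorem setOf_not_exists_int_repr_eq {u : ℕ} {d : ℤ} (hc : (c : ℤ) = u * a + d) (p : ℕ) :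
    {n : ℕ | 0 < n ∧ ¬ ∃ y : ℕ → ℕ, (p * n : ℤ) = (y 0 : ℤ) * a +
        ∑ i ∈ Icc 1 k, (y i : ℤ) * (((u : ℤ) * b i + 1) * a + d * b i)} =
      {n | 0 < n ∧ p * n ∉ gcns a c b k} := by
  have hgen : ∀ i, ((u : ℤ) * b i + 1) * a + d * b i = ((a + c * b i : ℕ) : ℤ) := fun i => by
    push_cast
    rw [hc]
    ring
  simp only [hgen, gcns, Set.mem_ofPred_eq]
  norm_cast

end Semigroup

structure IsGreedyDigits_s7 (s : ℕ → ℕ) (k : ℕ) (x : ℕ → ℕ) : Prop where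
  digit_le : ∀ i, 1 ≤ i → i ≤ k - 1 → x i ≤ s i
  eq_zero_below : ∀ i, 2 ≤ i → i ≤ k - 1 → x i = s i → ∀ j, 1 ≤ j → j < i → x j = 0

section Digits

variable {b s : ℕ → ℕ} {k : ℕ} (hb1 : b 1 = 1)
  (hbrec : ∀ i, 1 ≤ i → i ≤ k - 1 → b (i + 1) = s i * b i + 1)
  (hs1 : ∀ i, 1 ≤ i → i ≤ k - 1 → 1 ≤ s i)
  (hsmono : ∀ i, 2 ≤ i → i ≤ k - 1 → s (i - 1) ≤ s i)

include hb1 hbrec in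
theorem digit_pos {j : ℕ} (hj1 : 1 ≤ j) (hjk : j ≤ k) : 0 < b j := by
  obtain rfl | hj := hj1.eq_or_lt
  · omega
  · obtain ⟨i, rfl⟩ : ∃ i, j = i + 1 := ⟨j - 1, by omega⟩
    rw [hbrec i (by omega) (by omega)]
    omega

include hbrec hs1 in
theorem digit_le_digit {i j : ℕ} (hi : 1 ≤ i) (hij : i ≤ j) (hjk : j ≤ k) : b i ≤ b j := by
  induction j, hij using Nat.le_induction with
  | base => rfl
  | succ j hij ih =>
    have := hs1 j (by omega) (by omega)
    rw [hbrec j (by omega) (by omega)]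
    nlinarith [ih (by omega)]

include hs1 in
theorem le_sum_digits {m : ℕ} (hm : m ≤ k - 1) : m ≤ ∑ i ∈ Icc 1 m, s i := by
  simpa using card_nsmul_le_sum (Icc 1 m) s 1 fun i hi => by
    have := mem_Icc.1 hi
    exact hs1 i this.1 (by omega)

include hb1 hbrec hsmono in
theorem greedyDigitSum_le_succ_add {j : ℕ} (hj1 : 1 ≤ j) (hjk : j ≤ k - 1) (R : ℕ) :
    greedyDigitSum b j R + 1 ≤ greedyDigitSum b j (R + 1) + s j := by
  induction j, hj1 using Nat.le_induction generalizing R with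
  | base => rw [greedyDigitSum_one hb1, greedyDigitSum_one hb1]; omega
  | succ j hj ih =>
    have hb : b (j + 1) = s j * b j + 1 := hbrec j hj (by omega)
    have hsj : s j ≤ s (j + 1) := by simpa using hsmono (j + 1) (by omega) hjk
    have hpos : 0 < b j := digit_pos hb1 hbrec hj (by omega)
    obtain ⟨Q, ρ, hρ, rfl⟩ : ∃ Q ρ, ρ < b (j + 1) ∧ R = Q * b (j + 1) + ρ :=
      ⟨R / b (j + 1), R % b (j + 1), Nat.mod_lt _ (by omega), (Nat.div_add_mod' _ _).symm⟩
    rw [greedyDigitSum_succ_mul_add hρ, add_assoc (Q * b (j + 1))]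
    obtain hlt | rfl : ρ + 1 < b (j + 1) ∨ ρ = s j * b j := by omega
    · rw [greedyDigitSum_succ_mul_add hlt]
      have := ih (by omega) ρ
      omega
    · rw [← hb, ← add_one_mul, greedyDigitSum_mul hj hpos,
        greedyDigitSum_mul (j := j + 1) (by omega) (by omega)]
      omega

include hb1 hbrec hsmono in
theorem greedyDigitSum_add_mul_digit_succ {j : ℕ} (hj1 : 1 ≤ j) (hjk : j ≤ k - 1) (V t : ℕ) :
    greedyDigitSum b j V + t ≤ greedyDigitSum b j (V + t * b (j + 1)) := by
  induction t with
  | zero => simp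
  | succ t ih =>
    have hdrop :=
      greedyDigitSum_le_succ_add hb1 hbrec hsmono hj1 hjk (V + t * b (j + 1) + s j * b j)
    rw [greedyDigitSum_add_mul hj1 (digit_pos hb1 hbrec hj1 (by omega))] at hdrop
    have e : V + (t + 1) * b (j + 1) = V + t * b (j + 1) + s j * b j + 1 := by
      rw [add_one_mul, hbrec j hj1 hjk]
      ring
    rw [e]
    omega

include hb1 hbrec hsmono in
theorem greedyDigitSum_sum_le {j : ℕ} (hj1 : 1 ≤ j) (hjk : j ≤ k) (y : ℕ → ℕ) :
    greedyDigitSum b j (∑ i ∈ Icc 1 j, b i * y i) ≤ ∑ i ∈ Icc 1 j, y i := by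
  induction j, hj1 using Nat.le_induction with
  | base => simp [greedyDigitSum_one hb1, hb1]
  | succ j hj ih =>
    have hpos : 0 < b (j + 1) := digit_pos hb1 hbrec (by omega) hjk
    obtain ⟨Q, ρ, hρ, hL⟩ : ∃ Q ρ, ρ < b (j + 1) ∧ ∑ i ∈ Icc 1 j, b i * y i = ρ + Q * b (j + 1) :=
      ⟨_, _, Nat.mod_lt _ hpos, (Nat.mod_add_div' _ _).symm⟩
    have hih := ih (by omega)
    have hstep := greedyDigitSum_add_mul_digit_succ hb1 hbrec hsmono hj (by omega) ρ Q
    rw [hL] at hih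
    rw [sum_Icc_succ_top (by omega), sum_Icc_succ_top (by omega), hL,
      show ρ + Q * b (j + 1) + b (j + 1) * y (j + 1) = (Q + y (j + 1)) * b (j + 1) + ρ by ring,
      greedyDigitSum_succ_mul_add hρ]
    omega

namespace IsGreedyDigits_s7

variable {x : ℕ → ℕ} (hx : IsGreedyDigits_s7 s k x)

include hb1 hbrec hx in
theorem sum_lt {j : ℕ} (hj : j ≤ k - 1) : ∑ i ∈ Icc 1 j, b i * x i < b (j + 1) := by
  induction j with
  | zero => simp [hb1]
  | succ j ih =>
    rw [sum_Icc_succ_top (by omega), hbrec (j + 1) (by omega) hj]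
    by_cases hxs : x (j + 1) = s (j + 1)
    · have hzero : ∑ i ∈ Icc 1 j, b i * x i = 0 := sum_eq_zero fun i hi => by
        have := mem_Icc.1 hi
        rw [hx.eq_zero_below (j + 1) (by omega) hj hxs i this.1 (by omega), mul_zero]
      rw [hzero, hxs, mul_comm]
      omega
    · have := ih (by omega)
      have := Nat.mul_le_mul_left (b (j + 1))
        (show x (j + 1) + 1 ≤ s (j + 1) by have := hx.digit_le (j + 1) (by omega) hj; omega)
      linarith

include hb1 hbrec hx in
theorem greedyDigitSum_eq {j : ℕ} (hj : j ≤ k) :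
    greedyDigitSum b j (∑ i ∈ Icc 1 j, b i * x i) = ∑ i ∈ Icc 1 j, x i := by
  induction j with
  | zero => simp [greedyDigitSum]
  | succ j ih =>
    rw [sum_Icc_succ_top (by omega), sum_Icc_succ_top (by omega),
      add_comm (∑ i ∈ Icc 1 j, b i * x i), mul_comm (b (j + 1)),
      greedyDigitSum_succ_mul_add (hx.sum_lt hb1 hbrec (by omega)), ih (by omega), add_comm]

include hb1 hbrec hsmono hx in
theorem sum_le_of_sum_mul_eq (hk : 1 ≤ k) {y : ℕ → ℕ}
    (h : ∑ i ∈ Icc 1 k, b i * y i = ∑ i ∈ Icc 1 k, b i * x i) :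
    ∑ i ∈ Icc 1 k, x i ≤ ∑ i ∈ Icc 1 k, y i := by
  rw [← hx.greedyDigitSum_eq hb1 hbrec le_rfl, ← h]
  exact greedyDigitSum_sum_le hb1 hbrec hsmono hk le_rfl y

include hs1 hx in
theorem sum_add_le {m : ℕ} (hm : m ≤ k - 1) :
    ∑ i ∈ Icc 1 m, x i + m ≤ ∑ i ∈ Icc 1 m, s i + 1 := by
  induction m with
  | zero => simp
  | succ m ih =>
    rw [sum_Icc_succ_top (by omega), sum_Icc_succ_top (by omega)]
    have := ih (by omega)
    have := hx.digit_le (m + 1) (by omega) hm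
    by_cases hxs : x (m + 1) = s (m + 1)
    · have hzero : ∑ i ∈ Icc 1 m, x i = 0 := sum_eq_zero fun i hi => by
        have := mem_Icc.1 hi
        exact hx.eq_zero_below (m + 1) (by omega) hm hxs i this.1 (by omega)
      have := le_sum_digits hs1 (m := m) (by omega)
      omega
    · omega

include hb1 hbrec hs1 hx in
theorem sum_le_add_of_sum_mul_le (hk : 1 ≤ k) {c : ℕ} (hc : ∑ i ∈ Icc 1 (k - 1), s i + 2 ≤ c + k)
    {y : ℕ → ℕ} (h : ∑ i ∈ Icc 1 k, b i * x i ≤ ∑ i ∈ Icc 1 k, b i * y i) :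
    ∑ i ∈ Icc 1 k, x i ≤ ∑ i ∈ Icc 1 k, y i + c := by
  have htop : b k * x k ≤ b k * ∑ i ∈ Icc 1 k, y i := calc
    b k * x k ≤ ∑ i ∈ Icc 1 k, b i * x i :=
      single_le_sum (f := fun i => b i * x i) (fun _ _ => Nat.zero_le _) (mem_Icc.2 ⟨hk, le_rfl⟩)
    _ ≤ ∑ i ∈ Icc 1 k, b i * y i := h
    _ ≤ ∑ i ∈ Icc 1 k, b k * y i := sum_le_sum fun i hi =>
      Nat.mul_le_mul_right _ (digit_le_digit hbrec hs1 (mem_Icc.1 hi).1 (mem_Icc.1 hi).2 le_rfl)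
    _ = b k * ∑ i ∈ Icc 1 k, y i := (mul_sum ..).symm
  have hxk := Nat.le_of_mul_le_mul_left htop (digit_pos hb1 hbrec hk le_rfl)
  have hlow := hx.sum_add_le hs1 (le_refl (k - 1))
  obtain ⟨k, rfl⟩ : ∃ k', k = k' + 1 := ⟨k - 1, by omega⟩
  rw [sum_Icc_succ_top (by omega)]
  simp only [add_tsub_cancel_right] at hlow hc
  omega

end IsGreedyDigits_s7

include hb1 hbrec hs1 hsmono in
theorem mem_gcns_iff (hk : 1 ≤ k) {a c : ℕ} (hc : ∑ i ∈ Icc 1 (k - 1), s i + 2 ≤ c + k)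
    (hca : Nat.Coprime c a) {x : ℕ → ℕ} (hx : IsGreedyDigits_s7 s k x) {M : ℕ}
    (hxM : ∑ i ∈ Icc 1 k, b i * x i = M) (hMa : M < a) {N : ℕ} (hN : N ≡ c * M [MOD a]) :
    N ∈ gcns a c b k ↔ (∑ i ∈ Icc 1 k, x i) * a + c * M ≤ N := by
  constructor
  · rintro ⟨y, rfl⟩
    rw [sum_mul_add_mul] at hN ⊢
    have hcT : c * ∑ i ∈ Icc 1 k, b i * y i ≡ c * M [MOD a] := by
      unfold Nat.ModEq at hN ⊢
      rwa [add_left_comm, ← add_assoc, ← add_mul, add_comm, Nat.add_mul_mod_self_right] at hN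
    obtain ⟨t, hT⟩ : ∃ t, ∑ i ∈ Icc 1 k, b i * y i = M + t * a := by
      refine ⟨(∑ i ∈ Icc 1 k, b i * y i) / a, ?_⟩
      rw [← Nat.mod_eq_of_lt hMa, ← Nat.ModEq.cancel_left_of_coprime hca.symm hcT,
        Nat.mod_add_div']
    have key : ∑ i ∈ Icc 1 k, x i ≤ ∑ i ∈ Icc 1 k, y i + c * t := by
      rcases Nat.eq_zero_or_pos t with rfl | ht
      · simpa using
          hx.sum_le_of_sum_mul_eq hb1 hbrec hsmono hk (by rw [hT, hxM, zero_mul, add_zero])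
      · have := hx.sum_le_add_of_sum_mul_le hb1 hbrec hs1 hk hc (y := y) (by rw [hT, hxM]; omega)
        nlinarith
    rw [hT]
    nlinarith [Nat.mul_le_mul_right a key]
  · intro hle
    have hw : (∑ i ∈ Icc 1 k, x i) * a + c * M ≡ N [MOD a] := by
      unfold Nat.ModEq at hN ⊢
      rw [add_comm, Nat.add_mul_mod_self_right, hN]
    obtain ⟨j, hj⟩ := (Nat.modEq_iff_dvd' hle).1 hw
    have hNj : N = j * a + ∑ i ∈ Icc 1 k, x i * (a + c * b i) := by
      rw [sum_mul_add_mul, hxM]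
      have := Nat.sub_add_cancel hle
      rw [hj] at this
      linarith
    exact hNj ▸ mul_add_sum_mem_gcns j x

include hb1 hbrec hs1 hsmono in
theorem mul_mem_gcns_mul_iff (hk : 1 ≤ k) {c p q : ℕ}
    (hc : ∑ i ∈ Icc 1 (k - 1), s i + 2 ≤ c + k) (hca : Nat.Coprime c (p * q)) (hp : 0 < p)
    {r : ℕ} (hr : r < q) {x : ℕ → ℕ} (hx : IsGreedyDigits_s7 s k x)
    (hxr : ∑ i ∈ Icc 1 k, b i * x i = r * p) {n : ℕ} (hn : n % q = c * r % q) :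
    p * n ∈ gcns (p * q) c b k ↔ ∑ i ∈ Icc 1 k, x i + c * r / q ≤ n / q := by
  have hN : p * n ≡ c * (r * p) [MOD p * q] := by
    rw [show c * (r * p) = p * (c * r) by ring]
    exact Nat.ModEq.mul_left' p hn
  rw [mem_gcns_iff hb1 hbrec hs1 hsmono hk hc hca hx hxr (by nlinarith) hN]
  have e1 : p * n = p * q * (n / q) + p * (c * r % q) := by
    rw [← hn, mul_assoc, ← mul_add, Nat.div_add_mod]
  have e2 : c * (r * p) = p * q * (c * r / q) + p * (c * r % q) := by
    rw [mul_assoc, ← mul_add, Nat.div_add_mod]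
    ring
  rw [e1, e2, ← add_assoc, show ∀ t, t * (p * q) + p * q * (c * r / q) = p * q * (t + c * r / q)
    from fun t => by ring, Nat.add_le_add_iff_right, Nat.mul_le_mul_left_iff (by nlinarith)]


include hb1 hbrec hs1 hsmono in
theorem setOf_not_mul_mem_gcns_eq (hk : 1 ≤ k) {c p q : ℕ}
    (hc : ∑ i ∈ Icc 1 (k - 1), s i + 2 ≤ c + k) (hca : Nat.Coprime c (p * q)) (hp : 0 < p)
    (hq : 0 < q) (x : ℕ → ℕ → ℕ) (hx : ∀ r ∈ Icc 1 (q - 1), IsGreedyDigits_s7 s k (x r))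
    (hxr : ∀ r ∈ Icc 1 (q - 1), ∑ i ∈ Icc 1 k, b i * x r i = r * p) :
    {n | 0 < n ∧ p * n ∉ gcns (p * q) c b k} =
      {n | ∃ r ∈ Icc 1 (q - 1), n % q = c * r % q ∧ n / q < ∑ i ∈ Icc 1 k, x r i + c * r / q} := by
  have hcq : Nat.Coprime c q := hca.coprime_dvd_right (dvd_mul_left q p)
  have hmem : ∀ r ∈ Icc 1 (q - 1), ∀ n, n % q = c * r % q →
      (p * n ∈ gcns (p * q) c b k ↔ ∑ i ∈ Icc 1 k, x r i + c * r / q ≤ n / q) :=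
    fun r hr n hn => mul_mem_gcns_mul_iff hb1 hbrec hs1 hsmono hk hc hca hp
      (by have := mem_Icc.1 hr; omega) (hx r hr) (hxr r hr) hn
  ext n
  simp only [Set.mem_ofPred_eq]
  constructor
  · rintro ⟨hn, hgap⟩
    have hnq : n % q ≠ 0 := fun h => hgap <| by
      rw [show p * n = n / q * (p * q) by
        rw [mul_left_comm, Nat.div_mul_cancel (Nat.dvd_of_mod_eq_zero h)]]
      exact mul_mem_gcns _
    obtain ⟨r, hrq, hr⟩ := Nat.exists_mul_mod_eq_of_coprime (n % q) hcq hq.ne'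
    rw [Nat.mod_mod] at hr
    have hrI : r ∈ Icc 1 (q - 1) :=
      mem_Icc.2 ⟨Nat.pos_of_ne_zero (by rintro rfl; simp_all), by omega⟩
    exact ⟨r, hrI, hr.symm, not_le.1 fun h => hgap ((hmem r hrI n hr.symm).2 h)⟩
  · rintro ⟨r, hr, hn, hlt⟩
    refine ⟨Nat.pos_of_ne_zero ?_, fun h => not_le.2 hlt ((hmem r hr n hn).1 h)⟩
    rintro rfl
    have hr := mem_Icc.1 hr
    exact Nat.not_dvd_of_pos_of_lt hr.1 (by omega)
      (hcq.symm.dvd_mul_left.1 (Nat.dvd_of_mod_eq_zero (by simpa using hn.symm)))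

include hb1 hbrec hs1 hsmono in
theorem ncard_setOf_not_mul_mem_gcns (hk : 1 ≤ k) {c p q : ℕ}
    (hc : ∑ i ∈ Icc 1 (k - 1), s i + 2 ≤ c + k) (hca : Nat.Coprime c (p * q)) (hp : 0 < p)
    (hq : 0 < q) (x : ℕ → ℕ → ℕ) (hx : ∀ r ∈ Icc 1 (q - 1), IsGreedyDigits_s7 s k (x r))
    (hxr : ∀ r ∈ Icc 1 (q - 1), ∑ i ∈ Icc 1 k, b i * x r i = r * p) :
    {n | 0 < n ∧ p * n ∉ gcns (p * q) c b k}.ncard =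
      ∑ r ∈ Icc 1 (q - 1), (∑ i ∈ Icc 1 k, x r i + c * r / q) := by
  rw [setOf_not_mul_mem_gcns_eq hb1 hbrec hs1 hsmono hk hc hca hp hq x hx hxr,
    ncard_setOf_mod_eq_and_div_lt _ fun r _ => Nat.mod_lt _ hq]
  intro r hr r' hr' h
  have := mem_Icc.1 hr
  have := mem_Icc.1 hr'
  have hcq : Nat.Coprime c q := hca.coprime_dvd_right (dvd_mul_left q p)
  exact (Nat.ModEq.cancel_left_of_coprime hcq.symm h).eq_of_lt_of_lt (by omega) (by omega)

end Digits

theorem stmt_7_general (a k u p : ℕ) (d : ℤ) (b s : ℕ → ℕ)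
    (ha : 2 ≤ a) (hk : 2 ≤ k)
    (hgcd : Int.gcd (a : ℤ) d = 1)
    (hb1 : b 1 = 1)
    (hbrec : ∀ i, 1 ≤ i → i ≤ k - 1 → b (i + 1) = s i * b i + 1)
    (hs1 : ∀ i, 1 ≤ i → i ≤ k - 1 → 1 ≤ s i)
    (hsmono : ∀ i, 2 ≤ i → i ≤ k - 1 → s (i - 1) ≤ s i)
    (hpa : p ∣ a)
    (hcond : (∑ i ∈ Finset.Icc 1 (k - 1), (s i : ℤ)) ≤ (u : ℤ) * a + d + k - 2)
    -- `x r` is the greedy presentation of `r * p`, for each `1 ≤ r ≤ a/p - 1`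
    (x : ℕ → ℕ → ℕ)
    (hxsum : ∀ r, 1 ≤ r → r ≤ a / p - 1 →
      ∑ i ∈ Finset.Icc 1 k, b i * x r i = r * p)
    (hxle : ∀ r, 1 ≤ r → r ≤ a / p - 1 → ∀ i, 1 ≤ i → i ≤ k - 1 → x r i ≤ s i)
    (hxzero : ∀ r, 1 ≤ r → r ≤ a / p - 1 → ∀ i, 2 ≤ i → i ≤ k - 1 → x r i = s i →
      ∀ j, 1 ≤ j → j < i → x r j = 0) :
    2 * (({n : ℕ | 0 < n ∧ ¬ ∃ y : ℕ → ℕ, (p * n : ℤ) = (y 0 : ℤ) * a +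
          ∑ i ∈ Finset.Icc 1 k, (y i : ℤ) * (((u : ℤ) * b i + 1) * a + d * b i)}).ncard : ℤ)
      = 2 * (∑ r ∈ Finset.Icc 1 (a / p - 1),
          ((∑ i ∈ Finset.Icc 1 k, x r i : ℕ) : ℤ)) +
        ((u : ℤ) * a + d - 1) * (((a / p : ℕ) : ℤ) - 1) := by
  obtain ⟨q, rfl⟩ := hpa
  have hp : 0 < p := Nat.pos_of_ne_zero fun hp => by simp [hp] at ha
  have hq : 0 < q := Nat.pos_of_ne_zero fun hq => by simp [hq] at ha
  rw [Nat.mul_div_cancel_left q hp] at hxsum hxle hxzero ⊢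
  obtain ⟨c, hc⟩ : ∃ c : ℕ, (c : ℤ) = u * ((p * q : ℕ) : ℤ) + d := by
    have : ((k - 1 : ℕ) : ℤ) ≤ ∑ i ∈ Icc 1 (k - 1), (s i : ℤ) := by
      exact_mod_cast le_sum_digits hs1 le_rfl
    exact ⟨_, Int.toNat_of_nonneg (by omega)⟩
  have hcN : ∑ i ∈ Icc 1 (k - 1), s i + 2 ≤ c + k := by
    rw [← hc] at hcond
    exact_mod_cast (by push_cast; omega : ((∑ i ∈ Icc 1 (k - 1), s i + 2 : ℕ) : ℤ) ≤ c + k)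
  have hca : Nat.Coprime c (p * q) := by
    rw [← Nat.isCoprime_iff_coprime, hc]
    have := (Int.isCoprime_iff_gcd_eq_one.2 hgcd).symm.add_mul_left_left (u : ℤ)
    rwa [add_comm, mul_comm] at this
  have hx : ∀ r ∈ Icc 1 (q - 1), IsGreedyDigits_s7 s k (x r) := fun r hr =>
    ⟨hxle r (mem_Icc.1 hr).1 (mem_Icc.1 hr).2, hxzero r (mem_Icc.1 hr).1 (mem_Icc.1 hr).2⟩
  rw [setOf_not_exists_int_repr_eq hc, ncard_setOf_not_mul_mem_gcns hb1 hbrec hs1 hsmono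
    (by omega) hcN hca hp hq x hx fun r hr => hxsum r (mem_Icc.1 hr).1 (mem_Icc.1 hr).2,
    sum_add_distrib, ← hc]
  have hfloor := two_mul_sum_mul_div_add (hca.coprime_dvd_right (dvd_mul_left q p))
  zify [hq] at hfloor
  push_cast
  linarith

/-- genus of the quotient of a GCNS numerical semigroup.
If `u·a + d + k − 2 ≥ Σ s_i`, then
`g(⟨A⟩/p) = Σ_{r=1}^{a/p−1} (Σ_i x_i)_{rp} + ((u·a + d − 1)/2)·(a/p − 1)`,
where `(Σ_i x_i)_{rp}` is the coordinate sum of the greedy presentation of `r·p`.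
(The identity is stated after multiplication by 2.) -/
theorem stmt_7 (a k u p : ℕ) (d : ℤ) (b s : ℕ → ℕ)
    (ha : 2 ≤ a) (hk : 2 ≤ k) (hu : 1 ≤ u)
    (hd : d ≠ 0) (hgcd : Int.gcd (a : ℤ) d = 1)
    (hb1 : b 1 = 1)
    (hbrec : ∀ i, 1 ≤ i → i ≤ k - 1 → b (i + 1) = s i * b i + 1)
    (hs1 : ∀ i, 1 ≤ i → i ≤ k - 1 → 1 ≤ s i)
    (hsmono : ∀ i, 2 ≤ i → i ≤ k - 1 → s (i - 1) ≤ s i)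
    (hneg : d < 0 → ∀ i, 1 ≤ i → i ≤ k →
      1 < ((u : ℤ) * b i + 1) * a + d * b i)
    (hp : 0 < p) (hpa : p ∣ a) (hpne : p ≠ a)
    (hcond : (∑ i ∈ Finset.Icc 1 (k - 1), (s i : ℤ)) ≤ (u : ℤ) * a + d + k - 2)
    -- `x r` is the greedy presentation of `r * p`, for each `1 ≤ r ≤ a/p - 1`
    (x : ℕ → ℕ → ℕ)
    (hxsum : ∀ r, 1 ≤ r → r ≤ a / p - 1 →
      ∑ i ∈ Finset.Icc 1 k, b i * x r i = r * p)
    (hxk : ∀ r, 1 ≤ r → r ≤ a / p - 1 → x r k = r * p / b k)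
    (hxle : ∀ r, 1 ≤ r → r ≤ a / p - 1 → ∀ i, 1 ≤ i → i ≤ k - 1 → x r i ≤ s i)
    (hxzero : ∀ r, 1 ≤ r → r ≤ a / p - 1 → ∀ i, 2 ≤ i → i ≤ k - 1 → x r i = s i →
      ∀ j, 1 ≤ j → j < i → x r j = 0) :
    2 * (({n : ℕ | 0 < n ∧ ¬ ∃ y : ℕ → ℕ, (p * n : ℤ) = (y 0 : ℤ) * a +
          ∑ i ∈ Finset.Icc 1 k, (y i : ℤ) * (((u : ℤ) * b i + 1) * a + d * b i)}).ncard : ℤ)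
      = 2 * (∑ r ∈ Finset.Icc 1 (a / p - 1),
          ((∑ i ∈ Finset.Icc 1 k, x r i : ℕ) : ℤ)) +
        ((u : ℤ) * a + d - 1) * (((a / p : ℕ) : ℤ) - 1) :=
  stmt_7_general a k u p d b s ha hk hgcd hb1 hbrec hs1 hsmono hpa hcond x hxsum hxle hxzero
end

section
/- Let A = (a, (u+1)*a + d, ((s+1)*u + 1)*a + (s+1)*d), where d is a positive integer, gcd(a, d) = 1, a ≥ 2, u is a positive integer, and u + 1 ≥ s ≥ 1. Let p be a positive divisor of a with p ≠ a. Then the Frobenius number of the quotient is F(⟨A⟩/p) = (a − p − s*⌊(a−p)/(s+1)⌋) * (a/p) + (a/p − 1)*(u*a + d) − a/p. -/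
/-!
Every element of `⟨A⟩` has the form `c * a + t * d`. Writing `t = (s + 1) k + r` with `r ≤ s`, the
cheapest way to reach the `d`-coefficient `t` uses `k` copies of the third generator and `r` of the
second, so `c * a + t * d ∈ ⟨A⟩` iff `c ≥ minCoeff u s t`, and for `s ≤ u + 1` this bound is monotone
in `t`. For `a = p * q`, write `n = j * q + τ * d` with `0 ≤ τ < q` (possible as `gcd(q, d) = 1`);
then `p * n ∈ ⟨A⟩` iff `j ≥ minCoeff u s (p * τ)`, because `d`-coefficients congruent to `p * τ`
modulo `a` and larger than it only raise the bound. The largest failing `n` therefore has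
`τ = q - 1` and `j = minCoeff u s (p * (q - 1)) - 1`.
-/

theorem Nat.div_add_mod_le_of_eq_add_mul {b t y w : ℕ} (h : t = y + b * w) :
    t / b + t % b ≤ y + w := by
  rcases Nat.eq_zero_or_pos b with rfl | hb
  · simp_all
  have hw : w ≤ t / b := (Nat.le_div_iff_mul_le hb).mpr (by rw [h]; nlinarith)
  have := Nat.div_add_mod t b
  nlinarith

theorem exists_eq_mul_add_mul_of_coprime {a d : ℕ} (had : a.Coprime d) (ha : 0 < a) (m : ℤ) :
    ∃ t < a, ∃ j : ℤ, m = j * a + t * d := by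
  obtain ⟨x, y, hxy⟩ := Nat.isCoprime_iff_coprime.mpr had
  have ha' : (0 : ℤ) < a := by exact_mod_cast ha
  have hnn := Int.emod_nonneg (m * y) ha'.ne'
  have hlt := Int.emod_lt_of_pos (m * y) ha'
  refine ⟨(m * y % a).toNat, by omega, m * x + m * y / a * d, ?_⟩
  rw [Int.toNat_of_nonneg hnn]
  linear_combination (-m) * hxy - d * Int.emod_add_mul_ediv (m * y) a

theorem le_and_le_of_mul_add_eq {a d t₀ t : ℕ} {c j : ℤ} (had : a.Coprime d) (ht₀ : t₀ < a)
    (h : c * a + t * d = j * a + t₀ * d) : t₀ ≤ t ∧ c ≤ j := by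
  have hdvd : (a : ℤ) ∣ (t - t₀) * d := ⟨j - c, by linear_combination h⟩
  obtain ⟨k, hk⟩ := (Nat.isCoprime_iff_coprime.mpr had).dvd_of_dvd_mul_right hdvd
  have hk0 : 0 ≤ k := by nlinarith
  have hd : (0 : ℤ) ≤ d := by positivity
  constructor
  · have : (t₀ : ℤ) ≤ t := by nlinarith
    exact_mod_cast this
  · nlinarith [mul_nonneg hk0 hd]

def staircase (a d : ℕ) (f : ℕ → ℕ) : Set ℕ := {m | ∃ t c, m = c * a + t * d ∧ f t ≤ c}

theorem isGreatest_not_mem_staircase_div {p q d : ℕ} {f : ℕ → ℕ} (hf : Monotone f) (hp : 0 < p)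
    (hq : 0 < q) (hd : 0 < d) (hcop : (p * q).Coprime d) :
    IsGreatest {z : ℤ | ¬ ∃ n : ℕ, (n : ℤ) = z ∧ p * n ∈ staircase (p * q) d f}
      (((q : ℤ) - 1) * d + ((f (p * (q - 1)) : ℤ) - 1) * q) := by
  constructor
  · rintro ⟨n, hn, t, c, hrep, hc⟩
    have ht₁ : ((p * (q - 1) : ℕ) : ℤ) = p * q - p := by
      push_cast [Nat.cast_sub hq]; ring
    have hlt : p * (q - 1) < p * q := Nat.mul_lt_mul_of_pos_left (by omega) hp
    have hrepZ : (p * n : ℤ) = c * (p * q) + t * d := by exact_mod_cast hrep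
    obtain ⟨hle, hcle⟩ := le_and_le_of_mul_add_eq (c := c) (t := t) (j := f (p * (q - 1)) - 1)
      hcop hlt (by push_cast [ht₁]; rw [hn] at hrepZ; linear_combination -hrepZ)
    have := hf hle
    omega
  · intro z hz
    by_contra! hlt
    have hz0 : 0 ≤ z := by
      have : (q : ℤ) - 1 ≤ ((q : ℤ) - 1) * d := by nlinarith
      nlinarith
    lift z to ℕ using hz0
    refine hz ⟨z, rfl, ?_⟩
    obtain ⟨τ, hτ, j, hzj⟩ := exists_eq_mul_add_mul_of_coprime hcop.coprime_mul_left hq z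
    have hfj : (f (p * τ) : ℤ) ≤ j := by
      by_contra! hj
      have hτ' : (τ : ℤ) ≤ q - 1 := by omega
      have hmono : (f (p * τ) : ℤ) ≤ f (p * (q - 1)) := by
        exact_mod_cast hf (Nat.mul_le_mul_left p (by omega))
      nlinarith
    lift j to ℕ using (Nat.cast_nonneg _).trans hfj
    refine ⟨p * τ, j, ?_, by exact_mod_cast hfj⟩
    have : (p * z : ℤ) = j * (p * q) + p * τ * d := by rw [hzj]; ring
    exact_mod_cast this

def minCoeff (u s t : ℕ) : ℕ := u * t + t / (s + 1) + t % (s + 1)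

theorem minCoeff_mono {u s : ℕ} (hsu : s ≤ u + 1) : Monotone (minCoeff u s) := by
  refine monotone_nat_of_le_succ fun t => ?_
  have hs : 0 < s + 1 := s.succ_pos
  have hdiv := Nat.div_add_mod t (s + 1)
  have hmod := Nat.mod_lt t hs
  unfold minCoeff
  rcases Nat.lt_or_ge (t % (s + 1)) s with hr | hr
  · obtain ⟨hq, hm⟩ := (Nat.div_mod_unique hs).mpr
      (⟨by omega, by omega⟩ : t % (s + 1) + 1 + (s + 1) * (t / (s + 1)) = t + 1 ∧ _ < s + 1)
    rw [hq, hm]; nlinarith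
  · obtain ⟨hq, hm⟩ := (Nat.div_mod_unique hs).mpr
      (⟨by rw [mul_add]; omega, hs⟩ : 0 + (s + 1) * (t / (s + 1) + 1) = t + 1 ∧ 0 < s + 1)
    rw [hq, hm]; nlinarith

theorem exists_eq_generators_iff_mem_staircase {a u s d m : ℕ} :
    (∃ x y w : ℕ, m = x * a + y * ((u + 1) * a + d) + w * (((s + 1) * u + 1) * a + (s + 1) * d))
      ↔ m ∈ staircase a d (minCoeff u s) := by
  constructor
  · rintro ⟨x, y, w, rfl⟩
    have hle := Nat.div_add_mod_le_of_eq_add_mul (rfl : y + (s + 1) * w = _)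
    refine ⟨y + (s + 1) * w, x + y * (u + 1) + w * ((s + 1) * u + 1), by ring, ?_⟩
    unfold minCoeff
    nlinarith
  · rintro ⟨t, c, rfl, hc⟩
    refine ⟨c - minCoeff u s t, t % (s + 1), t / (s + 1), ?_⟩
    have hdiv := Nat.div_add_mod t (s + 1)
    unfold minCoeff at hc ⊢
    zify [hc] at hdiv ⊢
    linear_combination (-(u * a : ℤ) - d) * hdiv

theorem stmt_8_general (a u s d p : ℕ)
    (ha : 2 ≤ a) (hd : 1 ≤ d) (hsu : s ≤ u + 1)
    (hgcd : Nat.gcd a d = 1)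
    (hp : 0 < p) (hpa : p ∣ a) :
    IsGreatest {z : ℤ | ¬ ∃ n : ℕ, (n : ℤ) = z ∧ ∃ x y w : ℕ,
        p * n = x * a + y * ((u + 1) * a + d) +
          w * (((s + 1) * u + 1) * a + (s + 1) * d)}
      (((a : ℤ) - p - s * (((a - p) / (s + 1) : ℕ) : ℤ)) * ((a / p : ℕ) : ℤ) +
        (((a / p : ℕ) : ℤ) - 1) * ((u : ℤ) * a + d) - ((a / p : ℕ) : ℤ)) := by
  obtain ⟨q, rfl⟩ := hpa
  have hq : 0 < q := Nat.pos_of_ne_zero (by rintro rfl; omega)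
  simp_rw [exists_eq_generators_iff_mem_staircase]
  convert isGreatest_not_mem_staircase_div (minCoeff_mono hsu) hp hq hd hgcd using 1
  have ht : p * q - p = p * (q - 1) := (Nat.mul_sub_one p q).symm
  have hdiv := Nat.div_add_mod (p * (q - 1)) (s + 1)
  rw [Nat.mul_div_cancel_left q hp, ht, minCoeff]
  zify [hq] at hdiv ⊢
  linear_combination (-(q : ℤ)) * hdiv

/-- For `A = (a, (u+1)a + d, ((s+1)u + 1)a + (s+1)d)` with `d ≥ 1`,
`gcd(a,d) = 1`, `a ≥ 2`, `u + 1 ≥ s ≥ 1`, and `p` a positive divisor of `a`, `p ≠ a`: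
`F(⟨A⟩/p) = (a − p − s·⌊(a−p)/(s+1)⌋)·(a/p) + (a/p − 1)·(u·a + d) − a/p`. -/
theorem stmt_8 (a u s d p : ℕ)
    (ha : 2 ≤ a) (hd : 1 ≤ d) (hu : 1 ≤ u) (hs : 1 ≤ s) (hsu : s ≤ u + 1)
    (hgcd : Nat.gcd a d = 1)
    (hp : 0 < p) (hpa : p ∣ a) (hpne : p ≠ a) :
    IsGreatest {z : ℤ | ¬ ∃ n : ℕ, (n : ℤ) = z ∧ ∃ x y w : ℕ,
        p * n = x * a + y * ((u + 1) * a + d) +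
          w * (((s + 1) * u + 1) * a + (s + 1) * d)}
      (((a : ℤ) - p - s * (((a - p) / (s + 1) : ℕ) : ℤ)) * ((a / p : ℕ) : ℤ) +
        (((a / p : ℕ) : ℤ) - 1) * ((u : ℤ) * a + d) - ((a / p : ℕ) : ℤ)) :=
  stmt_8_general a u s d p ha hd hsu hgcd hp hpa
end

section
/- Let A = (a, (u+1)*a + d, ((s+1)*u + 1)*a + (s+1)*d), where d is a positive integer, gcd(a, d) = 1, a ≥ 2, u is a positive integer, and u + 1 ≥ s ≥ 1. Let p be a positive divisor of a with p ≠ a. Then the genus of the quotient is g(⟨A⟩/p) = (a/p − 1) * (u*a + a + d − 1)/2 − s * Σ_{r=1}^{a/p − 1} ⌊r*p/(s+1)⌋. -/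
/-!
Every element of `⟨A⟩` is `a * minWeight u s t + d * t + a * k`: among the representations
with a given `t = y + (s + 1) * w`, the one with `w = t / (s + 1)` uses the fewest copies of
`a`, and `s ≤ u + 1` makes `minWeight u s` monotone. Writing `a = p * q`, this gives
`⟨A⟩/p = {N r + q * k}` with `N r = q * minWeight u s (r * p) + d * r`; as `gcd(d, q) = 1`,
the `N r` with `r < q` form the Apéry set of `⟨A⟩/p` with respect to `q`. Selmer's formula
turns the genus into `∑_{r < q} ⌊N r / q⌋ = ∑ minWeight u s (r * p) + ∑ ⌊d * r / q⌋`, and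
both sums have closed forms, the second one being `(d - 1) * (q - 1) / 2`.
-/

open Finset

lemma image_mod_eq_range {q : ℕ} (hq : 0 < q) {f : ℕ → ℕ}
    (hf : Set.InjOn (fun r ↦ f r % q) (range q)) :
    (range q).image (fun r ↦ f r % q) = range q :=
  eq_of_subset_of_card_le
    (fun _ hx ↦ by
      obtain ⟨r, -, rfl⟩ := mem_image.mp hx
      exact mem_range.mpr (Nat.mod_lt _ hq))
    (card_image_of_injOn hf).ge

lemma injOn_mul_mod_range {d q : ℕ} (h : q.Coprime d) :
    Set.InjOn (fun r ↦ d * r % q) (range q) := fun r hr r' hr' hrr' ↦ by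
  have : r % q = r' % q := Nat.ModEq.cancel_left_of_coprime h hrr'
  rwa [Nat.mod_eq_of_lt (mem_range.mp hr), Nat.mod_eq_of_lt (mem_range.mp hr')] at this

lemma sum_range_mul_div_mul_two {d q : ℕ} (hq : 0 < q) (h : q.Coprime d) :
    (∑ r ∈ range q, d * r / q) * 2 = (d - 1) * (q - 1) := by
  have hmod : ∑ r ∈ range q, d * r % q = ∑ r ∈ range q, r := by
    calc ∑ r ∈ range q, d * r % q = ∑ x ∈ (range q).image (fun r ↦ d * r % q), x :=
          (sum_image (f := fun x ↦ x) (injOn_mul_mod_range h)).symm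
      _ = ∑ r ∈ range q, r := by rw [image_mod_eq_range hq (injOn_mul_mod_range h)]
  have hsplit : q * ∑ r ∈ range q, d * r / q + ∑ r ∈ range q, d * r % q =
      d * ∑ r ∈ range q, r := by
    rw [mul_sum, mul_sum, ← sum_add_distrib]
    exact sum_congr rfl fun r _ ↦ Nat.div_add_mod _ _
  rw [hmod] at hsplit
  have hdiv : q * ∑ r ∈ range q, d * r / q = (d - 1) * ∑ r ∈ range q, r := by
    rw [Nat.sub_one_mul]
    omega
  refine Nat.eq_of_mul_eq_mul_left hq ?_
  rw [← mul_assoc, hdiv, mul_assoc, sum_range_id_mul_two]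
  ring

/-- Selmer's formula: the hypotheses say that `{N r | r < q}` is the Apéry set of
`{N r + q * k}` with respect to `q`. -/
theorem ncard_setOf_not_exists_add_mul {q : ℕ} (hq : 0 < q) {N : ℕ → ℕ} (hN : Monotone N)
    (hmod : ∀ r, N (r % q) ≡ N r [MOD q]) (hinj : Set.InjOn (fun r ↦ N r % q) (range q)) :
    {n | ¬∃ r k, n = N r + q * k}.ncard = ∑ r ∈ range q, N r / q := by
  have hmem : ∀ r ∈ range q, ∀ n, n ≡ N r [MOD q] →
      ((∃ r' k, n = N r' + q * k) ↔ N r ≤ n) := by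
    intro r hr n hn
    constructor
    · rintro ⟨r', k, rfl⟩
      have hr' : r' % q = r := hinj (mem_range.mpr (Nat.mod_lt _ hq)) hr
        ((hmod r').trans ((Nat.add_mul_mod_self_left _ _ _).symm.trans hn))
      exact hr' ▸ (hN (Nat.mod_le r' q)).trans (Nat.le_add_right _ _)
    · intro hle
      obtain ⟨k, hk⟩ := (Nat.modEq_iff_dvd' hle).mp hn.symm
      exact ⟨r, k, by omega⟩
  have hgaps : {n | ¬∃ r k, n = N r + q * k} =
      ↑((range q).biUnion fun r ↦ (range (N r)).filter (· ≡ N r [MOD q])) := by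
    ext n
    have hn : n % q ∈ (range q).image (fun r ↦ N r % q) := by
      rw [image_mod_eq_range hq hinj]
      exact mem_range.mpr (Nat.mod_lt n hq)
    obtain ⟨r, hr, hrn⟩ := mem_image.mp hn
    simp only [Set.mem_ofPred_eq, coe_biUnion, Set.mem_iUnion, mem_coe, mem_filter, mem_range,
      exists_prop, hmem r hr n hrn.symm, not_le]
    constructor
    · exact fun h ↦ ⟨r, mem_range.mp hr, h, hrn.symm⟩
    · rintro ⟨r', hr', hlt, hn'⟩
      rwa [hinj hr (mem_range.mpr hr') (hrn.trans hn')]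
  rw [hgaps, Set.ncard_coe_finset, card_biUnion]
  · refine sum_congr rfl fun r _ ↦ ?_
    rw [← Nat.count_eq_card_filter_range, Nat.count_modEq_card _ hq]
    simp
  · intro r hr r' hr' hne
    exact disjoint_left.mpr fun n h h' ↦
      hne (hinj hr hr' ((mem_filter.mp h).2.symm.trans (mem_filter.mp h').2))

/-- The least value of `(u + 1) * y + ((s + 1) * u + 1) * w` subject to `y + (s + 1) * w = t`,
attained at `w = t / (s + 1)`. -/
def minWeight (u s t : ℕ) : ℕ := u * t + t % (s + 1) + t / (s + 1)

lemma minWeight_add_mul_div (u s t : ℕ) : minWeight u s t + s * (t / (s + 1)) = (u + 1) * t := by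
  have := Nat.mod_add_div t (s + 1)
  unfold minWeight
  linarith

lemma minWeight_le (u s y w : ℕ) :
    minWeight u s (y + (s + 1) * w) ≤ (u + 1) * y + ((s + 1) * u + 1) * w := by
  have hw : w ≤ (y + (s + 1) * w) / (s + 1) :=
    (Nat.le_div_iff_mul_le (Nat.succ_pos s)).mpr (by linarith)
  have := minWeight_add_mul_div u s (y + (s + 1) * w)
  nlinarith

lemma monotone_minWeight {u s : ℕ} (h : s ≤ u + 1) : Monotone (minWeight u s) := by
  refine monotone_nat_of_le_succ fun t ↦ ?_
  have hdiv : (t + 1) / (s + 1) ≤ t / (s + 1) + 1 := by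
    rw [Nat.succ_div]
    split_ifs <;> omega
  have := minWeight_add_mul_div u s t
  have := minWeight_add_mul_div u s (t + 1)
  nlinarith

lemma exists_eq_generators_iff (a u s d m : ℕ) :
    (∃ x y w : ℕ, m = x * a + y * ((u + 1) * a + d) +
        w * (((s + 1) * u + 1) * a + (s + 1) * d)) ↔
      ∃ t k : ℕ, m = a * minWeight u s t + d * t + a * k := by
  constructor
  · rintro ⟨x, y, w, rfl⟩
    obtain ⟨c, hc⟩ := Nat.exists_eq_add_of_le (minWeight_le u s y w)
    refine ⟨y + (s + 1) * w, x + c, ?_⟩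
    calc x * a + y * ((u + 1) * a + d) + w * (((s + 1) * u + 1) * a + (s + 1) * d)
        = a * ((u + 1) * y + ((s + 1) * u + 1) * w) + d * (y + (s + 1) * w) + a * x := by ring
      _ = _ := by rw [hc]; ring
  · rintro ⟨t, k, rfl⟩
    refine ⟨k, t % (s + 1), t / (s + 1), ?_⟩
    have ht := Nat.mod_add_div t (s + 1)
    unfold minWeight
    generalize t % (s + 1) = z, t / (s + 1) = v at ht ⊢
    subst ht
    ring

lemma exists_mul_eq_iff {a p q d : ℕ} (C : ℕ → ℕ) (ha : a = p * q) (hp : 0 < p)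
    (hpd : p.Coprime d) (n : ℕ) :
    (∃ t k, p * n = a * C t + d * t + a * k) ↔ ∃ r k, n = q * C (r * p) + d * r + q * k := by
  subst ha
  constructor
  · rintro ⟨t, k, h⟩
    have h' : p * n = p * (q * C t + q * k) + d * t := by rw [h]; ring
    obtain ⟨r, rfl⟩ := hpd.dvd_of_dvd_mul_left <|
      (Nat.dvd_add_right (dvd_mul_right _ _)).mp (h' ▸ dvd_mul_right p n)
    refine ⟨r, k, Nat.eq_of_mul_eq_mul_left hp ?_⟩
    rw [h, mul_comm r p]
    ring
  · rintro ⟨r, k, rfl⟩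
    exact ⟨r * p, k, by ring⟩

lemma ncard_gaps_quotient_eq_sum {u s d p q : ℕ} (hp : 0 < p) (hq : 0 < q) (hsu : s ≤ u + 1)
    (hpqd : (p * q).Coprime d) :
    {n : ℕ | 0 < n ∧ ¬ ∃ x y w : ℕ, p * n = x * (p * q) + y * ((u + 1) * (p * q) + d) +
      w * (((s + 1) * u + 1) * (p * q) + (s + 1) * d)}.ncard =
      ∑ r ∈ range q, (minWeight u s (r * p) + d * r / q) := by
  set N : ℕ → ℕ := fun r ↦ q * minWeight u s (r * p) + d * r
  have hNmod : ∀ r, N r % q = d * r % q := fun r ↦ Nat.mul_add_mod _ _ _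
  have hgaps : {n : ℕ | 0 < n ∧ ¬ ∃ x y w : ℕ, p * n = x * (p * q) +
      y * ((u + 1) * (p * q) + d) + w * (((s + 1) * u + 1) * (p * q) + (s + 1) * d)} =
      {n | ¬∃ r k, n = N r + q * k} := by
    ext n
    simp only [Set.mem_ofPred_eq, exists_eq_generators_iff,
      exists_mul_eq_iff _ rfl hp hpqd.coprime_mul_right]
    refine and_iff_right_of_imp fun h ↦ Nat.pos_of_ne_zero ?_
    rintro rfl
    exact h ⟨0, 0, by simp [minWeight]⟩
  rw [hgaps, ncard_setOf_not_exists_add_mul hq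
    (fun r r' h ↦ by
      dsimp only [N]
      gcongr
      exact monotone_minWeight hsu (Nat.mul_le_mul_right p h))
    (fun r ↦ by rw [Nat.ModEq, hNmod, hNmod, Nat.mul_mod, Nat.mod_mod, ← Nat.mul_mod])
    ((injOn_mul_mod_range hpqd.coprime_mul_left).congr fun r _ ↦ (hNmod r).symm)]
  exact sum_congr rfl fun r _ ↦ Nat.mul_add_div hq _ _

theorem stmt_9_general (a u s d p : ℕ)
    (ha : 2 ≤ a) (hd : 1 ≤ d) (hsu : s ≤ u + 1)
    (hgcd : Nat.gcd a d = 1)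
    (hpa : p ∣ a) :
    2 * (({n : ℕ | 0 < n ∧ ¬ ∃ x y w : ℕ,
        p * n = x * a + y * ((u + 1) * a + d) +
          w * (((s + 1) * u + 1) * a + (s + 1) * d)}).ncard : ℤ)
      = (((a / p : ℕ) : ℤ) - 1) * ((u : ℤ) * a + a + d - 1) -
        2 * s * ∑ r ∈ Finset.Icc 1 (a / p - 1), ((r * p / (s + 1) : ℕ) : ℤ) := by
  obtain ⟨q, rfl⟩ := hpa
  have hp : 0 < p := Nat.pos_of_ne_zero (by rintro rfl; omega)
  have hq : 0 < q := Nat.pos_of_ne_zero (by rintro rfl; omega)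
  have hweights : ∑ r ∈ range q, minWeight u s (r * p) + s * ∑ r ∈ range q, r * p / (s + 1) =
      (u + 1) * p * ∑ r ∈ range q, r := by
    rw [mul_sum, mul_sum, ← sum_add_distrib]
    exact sum_congr rfl fun r _ ↦ by rw [minWeight_add_mul_div]; ring
  have hIcc : ∑ r ∈ Icc 1 (q - 1), r * p / (s + 1) = ∑ r ∈ range q, r * p / (s + 1) := by
    rw [sum_range_eq_add_Ico _ hq, Icc_sub_one_right_eq_Ico_of_not_isMin (by simpa using hq.ne')]
    simp
  have hgauss := sum_range_id_mul_two q
  have hfloor := sum_range_mul_div_mul_two hq (Nat.Coprime.coprime_mul_left hgcd)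
  rw [Nat.mul_div_cancel_left q hp, ncard_gaps_quotient_eq_sum hp hq hsu hgcd, sum_add_distrib]
  rw [← hIcc] at hweights
  zify [hd, hq] at hweights hgauss hfloor ⊢
  linear_combination 2 * hweights + ((u : ℤ) + 1) * p * hgauss + hfloor

/-- For `A = (a, (u+1)a + d, ((s+1)u + 1)a + (s+1)d)` with `d ≥ 1`,
`gcd(a,d) = 1`, `a ≥ 2`, `u + 1 ≥ s ≥ 1`, and `p` a positive divisor of `a`, `p ≠ a`:
`g(⟨A⟩/p) = (a/p − 1)·(u·a + a + d − 1)/2 − s·Σ_{r=1}^{a/p−1} ⌊r·p/(s+1)⌋`.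
(The identity is stated after multiplication by 2.) -/
theorem stmt_9 (a u s d p : ℕ)
    (ha : 2 ≤ a) (hd : 1 ≤ d) (hu : 1 ≤ u) (hs : 1 ≤ s) (hsu : s ≤ u + 1)
    (hgcd : Nat.gcd a d = 1)
    (hp : 0 < p) (hpa : p ∣ a) (hpne : p ≠ a) :
    2 * (({n : ℕ | 0 < n ∧ ¬ ∃ x y w : ℕ,
        p * n = x * a + y * ((u + 1) * a + d) +
          w * (((s + 1) * u + 1) * a + (s + 1) * d)}).ncard : ℤ)
      = (((a / p : ℕ) : ℤ) - 1) * ((u : ℤ) * a + a + d - 1) -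
        2 * s * ∑ r ∈ Finset.Icc 1 (a / p - 1), ((r * p / (s + 1) : ℕ) : ℤ) :=
  stmt_9_general a u s d p ha hd hsu hgcd hpa
end

section
/- Let A = (a, (u+1)*a + d, (3u+1)*a + 3d, (10u+1)*a + 10d), where d is a positive integer, gcd(a, d) = 1, u ≥ 2, and a ≥ 2. Let p be a positive divisor of a with p ≠ a. Then the Frobenius number of the quotient is F(⟨A⟩/p) = (a/p) * (⌊(a−p)/10⌋ + u*a + d + φ_1((a−p) mod 10)) − (u*a + d), where φ_1(0), φ_1(1), ..., φ_1(9) equal −1, 0, 1, 0, 1, 2, 1, 2, 3, 2 respectively. -/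
/-!
A generator of `A` has the form `(1 + u k) a + k d` with `k ∈ {0, 1, 3, 10}`, so `m ∈ ⟨A⟩` iff
`m = α a + t d` with `u t + μ t ≤ α`, where `μ t = minCoins t` is the least number of parts
`1, 3, 10` summing to `t`. Writing `a = p q`, coprimality of `p` and `d` forces `p ∣ t`, so
`⟨A⟩/p = {α q + τ d | f τ ≤ α}` with `f τ = u p τ + μ (p τ)`; `f` is monotone because `μ` drops by
at most 2 per step and `u ≥ 2`. For such a set, with `gcd q d = 1` and `f` monotone, the least
element congruent to `τ d` modulo `q` (`τ < q`) is `f τ q + τ d`, largest at `τ = q - 1`; hence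
the Frobenius number is `f (q - 1) q + (q - 1) d - q`, the stated formula since `φ₁ r = μ r - 1`.
-/

def minCoins (t : ℕ) : ℕ := t / 10 + t % 10 / 3 + t % 10 % 3

theorem exists_minCoins (t : ℕ) : ∃ y v w : ℕ, y + 3 * v + 10 * w = t ∧ y + v + w = minCoins t :=
  ⟨t % 10 % 3, t % 10 / 3, t / 10, by omega, by unfold minCoins; omega⟩

theorem minCoins_add_mul_le {c : ℕ} (hc : ∀ t, minCoins (t + c) ≤ minCoins t + 1) (t k : ℕ) :
    minCoins (t + c * k) ≤ minCoins t + k := by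
  induction k with
  | zero => simp
  | succ k ih =>
    rw [mul_add_one, ← add_assoc]
    exact (hc _).trans (by omega)

theorem minCoins_le (y v w : ℕ) : minCoins (y + 3 * v + 10 * w) ≤ y + v + w := by
  have ones := minCoins_add_mul_le (c := 1) (fun t => by unfold minCoins; omega) 0 y
  have threes := minCoins_add_mul_le (c := 3) (fun t => by
    unfold minCoins; rcases Nat.lt_or_ge (t % 10) 7 with _ | _ <;> omega) y v
  have tens := minCoins_add_mul_le (c := 10) (fun t => by unfold minCoins; omega) (y + 3 * v) w
  simp only [zero_add, one_mul] at ones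
  have : minCoins 0 = 0 := rfl
  omega

theorem monotone_mul_add_minCoins {u : ℕ} (hu : 2 ≤ u) : Monotone fun t => u * t + minCoins t := by
  refine monotone_nat_of_le_succ fun t => ?_
  have : minCoins t ≤ minCoins (t + 1) + 2 := by unfold minCoins; omega
  simp only [mul_add_one]
  omega

theorem exists_generator_combination_iff (a u d m : ℕ) :
    (∃ x y v w : ℕ, m = x * a + y * ((u + 1) * a + d) + v * ((3 * u + 1) * a + 3 * d) +
        w * ((10 * u + 1) * a + 10 * d)) ↔
      ∃ α t : ℕ, m = α * a + t * d ∧ u * t + minCoins t ≤ α := by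
  constructor
  · rintro ⟨x, y, v, w, rfl⟩
    refine ⟨x + (y + v + w) + u * (y + 3 * v + 10 * w), y + 3 * v + 10 * w, by ring, ?_⟩
    have := minCoins_le y v w
    omega
  · rintro ⟨α, t, rfl, hα⟩
    obtain ⟨y, v, w, rfl, hcount⟩ := exists_minCoins t
    obtain ⟨x, rfl⟩ : ∃ x, α = x + (y + v + w) + u * (y + 3 * v + 10 * w) :=
      ⟨α - (y + v + w) - u * (y + 3 * v + 10 * w), by omega⟩
    exact ⟨x, y, v, w, by ring⟩

theorem exists_mul_eq_iff_of_coprime {p q d n : ℕ} (hp : 0 < p) (hpd : Nat.Coprime p d)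
    (P : ℕ → ℕ → Prop) :
    (∃ α t : ℕ, p * n = α * (p * q) + t * d ∧ P α t) ↔
      ∃ α τ : ℕ, n = α * q + τ * d ∧ P α (p * τ) := by
  constructor
  · rintro ⟨α, t, hn, hP⟩
    obtain ⟨τ, rfl⟩ : p ∣ t := by
      have hpa : p ∣ α * (p * q) := (dvd_mul_right p q).mul_left α
      exact hpd.dvd_of_dvd_mul_right ((Nat.dvd_add_right hpa).mp ⟨n, hn.symm⟩)
    refine ⟨α, τ, Nat.eq_of_mul_eq_mul_left hp ?_, hP⟩
    rw [hn]
    ring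
  · rintro ⟨α, τ, rfl, hP⟩
    exact ⟨α, p * τ, by ring, hP⟩

theorem exists_eq_mul_add_of_modEq {n b c q : ℕ} (hq : 0 < q) (hn : c ≡ n [MOD q])
    (hle : b * q + c ≤ n) : ∃ α, n = α * q + c ∧ b ≤ α := by
  obtain ⟨α, hα⟩ := (Nat.modEq_iff_dvd' (by omega)).mp hn
  rw [mul_comm] at hα
  exact ⟨α, by omega, Nat.le_of_mul_le_mul_right (by omega) hq⟩

section Frobenius

variable {q d : ℕ} {f : ℕ → ℕ}

theorem le_of_modEq_sub_one_mul (hq : 0 < q) (hqd : Nat.Coprime q d) (hf : Monotone f) {α τ : ℕ}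
    (hα : f τ ≤ α) (hτ : τ * d ≡ (q - 1) * d [MOD q]) :
    f (q - 1) * q + (q - 1) * d ≤ α * q + τ * d := by
  have hτq : τ ≡ q - 1 [MOD q] := Nat.ModEq.cancel_right_of_coprime hqd hτ
  have hle : q - 1 ≤ τ :=
    calc q - 1 = τ % q := by rw [hτq, Nat.mod_eq_of_lt (by omega)]
      _ ≤ τ := Nat.mod_le τ q
  exact Nat.add_le_add (Nat.mul_le_mul_right q ((hf hle).trans hα)) (Nat.mul_le_mul_right d hle)

theorem frobenius_not_representable (hq : 0 < q) (hqd : Nat.Coprime q d) (hf : Monotone f) :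
    ¬ ∃ n : ℕ, (n : ℤ) = ((f (q - 1) * q + (q - 1) * d : ℕ) : ℤ) - q ∧
      ∃ α τ : ℕ, n = α * q + τ * d ∧ f τ ≤ α := by
  rintro ⟨n, hN, α, τ, rfl, hα⟩
  have hsum : α * q + τ * d + q = f (q - 1) * q + (q - 1) * d := by omega
  have hτ : τ * d ≡ (q - 1) * d [MOD q] := by
    have := congrArg (· % q) hsum
    simpa [Nat.ModEq, Nat.add_mod, Nat.mul_mod_left] using this
  have := le_of_modEq_sub_one_mul hq hqd hf hα hτ
  omega

theorem representable_of_lt_frobenius (hq : 0 < q) (hqd : Nat.Coprime q d) (hf : Monotone f)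
    {n : ℕ} (hn : f (q - 1) * q + (q - 1) * d < n + q) :
    ∃ α τ : ℕ, n = α * q + τ * d ∧ f τ ≤ α := by
  obtain ⟨τ, hτq, hτ⟩ := Nat.exists_mul_mod_eq_of_coprime n hqd.symm hq.ne'
  have hτn : τ * d ≡ n [MOD q] := by rw [mul_comm]; exact hτ
  have hB : f τ * q + τ * d ≤ n := by
    refine Nat.ModEq.le_of_lt_add (m := q) ?_ ?_
    · simpa [Nat.ModEq, Nat.add_mod, Nat.mul_mod_left] using hτn
    · have := Nat.add_le_add (Nat.mul_le_mul_right q (hf (Nat.le_sub_one_of_lt hτq)))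
        (Nat.mul_le_mul_right d (Nat.le_sub_one_of_lt hτq))
      omega
  obtain ⟨α, rfl, hα⟩ := exists_eq_mul_add_of_modEq hq hτn hB
  exact ⟨α, τ, rfl, hα⟩

theorem isGreatest_frobenius (hq : 0 < q) (hd : 0 < d) (hqd : Nat.Coprime q d) (hf : Monotone f) :
    IsGreatest {z : ℤ | ¬ ∃ n : ℕ, (n : ℤ) = z ∧ ∃ α τ : ℕ, n = α * q + τ * d ∧ f τ ≤ α}
      (((f (q - 1) * q + (q - 1) * d : ℕ) : ℤ) - q) := by
  refine ⟨frobenius_not_representable hq hqd hf, fun z hz => ?_⟩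
  by_contra! hlt
  have : q - 1 ≤ (q - 1) * d := Nat.le_mul_of_pos_right _ hd
  lift z to ℕ using by omega
  exact hz ⟨z, rfl, representable_of_lt_frobenius hq hqd hf (by omega)⟩

end Frobenius

theorem getD_eq_minCoins_sub_one {r : ℕ} (hr : r < 10) :
    [(-1 : ℤ), 0, 1, 0, 1, 2, 1, 2, 3, 2].getD r 0 = (minCoins r : ℤ) - 1 := by
  interval_cases r <;> rfl

theorem minCoins_eq_div_add_minCoins_mod (t : ℕ) : minCoins t = t / 10 + minCoins (t % 10) := by
  unfold minCoins
  omega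

theorem frobenius_value_eq {a p q : ℕ} (u d : ℕ) (hp : 0 < p) (hq : 0 < q) (ha : a = p * q) :
    ((a / p : ℕ) : ℤ) * ((((a - p) / 10 : ℕ) : ℤ) + u * a + d +
        [(-1 : ℤ), 0, 1, 0, 1, 2, 1, 2, 3, 2].getD ((a - p) % 10) 0) - ((u : ℤ) * a + d) =
      (((u * (p * (q - 1)) + minCoins (p * (q - 1))) * q + (q - 1) * d : ℕ) : ℤ) - q := by
  have hdiv : a / p = q := by rw [ha, Nat.mul_div_cancel_left q hp]
  have hsub : a - p = p * (q - 1) := by rw [ha, Nat.mul_sub_one]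
  rw [hdiv, hsub, getD_eq_minCoins_sub_one (Nat.mod_lt _ (by norm_num)),
    minCoins_eq_div_add_minCoins_mod (p * (q - 1)), ha]
  push_cast [Nat.cast_sub hq]
  ring

theorem stmt_10_general (a u d p : ℕ)
    (ha : 2 ≤ a) (hd : 1 ≤ d) (hu : 2 ≤ u)
    (hgcd : Nat.gcd a d = 1)
    (hp : 0 < p) (hpa : p ∣ a) :
    IsGreatest {z : ℤ | ¬ ∃ n : ℕ, (n : ℤ) = z ∧ ∃ x y v w : ℕ,
        p * n = x * a + y * ((u + 1) * a + d) + v * ((3 * u + 1) * a + 3 * d) +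
          w * ((10 * u + 1) * a + 10 * d)}
      (((a / p : ℕ) : ℤ) * ((((a - p) / 10 : ℕ) : ℤ) + u * a + d +
          [(-1 : ℤ), 0, 1, 0, 1, 2, 1, 2, 3, 2].getD ((a - p) % 10) 0)
        - ((u : ℤ) * a + d)) := by
  obtain ⟨q, rfl⟩ := hpa
  have hq : 0 < q := Nat.pos_of_ne_zero (by rintro rfl; omega)
  have hf : Monotone fun τ => u * (p * τ) + minCoins (p * τ) :=
    (monotone_mul_add_minCoins hu).comp (monotone_id.const_mul' p)
  rw [frobenius_value_eq u d hp hq rfl]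
  convert isGreatest_frobenius hq hd (Nat.Coprime.coprime_mul_left hgcd) hf using 4
  simp only [exists_generator_combination_iff,
    exists_mul_eq_iff_of_coprime hp (Nat.Coprime.coprime_mul_right hgcd)]

/-- For `A = (a, (u+1)a + d, (3u+1)a + 3d, (10u+1)a + 10d)` with `d ≥ 1`,
`gcd(a,d) = 1`, `u ≥ 2`, `a ≥ 2`, and `p` a positive divisor of `a`, `p ≠ a`:
`F(⟨A⟩/p) = (a/p)·(⌊(a−p)/10⌋ + u·a + d + φ₁((a−p) mod 10)) − (u·a + d)`,
where `(φ₁(0),…,φ₁(9)) = (−1,0,1,0,1,2,1,2,3,2)`. -/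
theorem stmt_10 (a u d p : ℕ)
    (ha : 2 ≤ a) (hd : 1 ≤ d) (hu : 2 ≤ u)
    (hgcd : Nat.gcd a d = 1)
    (hp : 0 < p) (hpa : p ∣ a) (hpne : p ≠ a) :
    IsGreatest {z : ℤ | ¬ ∃ n : ℕ, (n : ℤ) = z ∧ ∃ x y v w : ℕ,
        p * n = x * a + y * ((u + 1) * a + d) + v * ((3 * u + 1) * a + 3 * d) +
          w * ((10 * u + 1) * a + 10 * d)}
      (((a / p : ℕ) : ℤ) * ((((a - p) / 10 : ℕ) : ℤ) + u * a + d +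
          [(-1 : ℤ), 0, 1, 0, 1, 2, 1, 2, 3, 2].getD ((a - p) % 10) 0)
        - ((u : ℤ) * a + d)) :=
  stmt_10_general a u d p ha hd hu hgcd hp hpa
end
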